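/- arXiv:2503.20747 — 5 statements merged into one kernel-verified Lean document; each statement's English description precedes it below -/
import Mathlib

section
/- Let s_0, s_1 > 0, θ ∈ (0,1), p_0, p_1 ∈ (1,∞), and let φ_0, φ_1 : [1,∞) → (0,∞) be continuous slowly varying functions. Set s = (1−θ)s_0 + θ s_1, 1/p = (1−θ)/p_0 + θ/p_1, φ = φ_0^{1−θ} φ_1^θ. For ϱ ≥ 1 define κ_k(s, φ, p, ϱ) = ((2^{sk} φ(2^k))^p + (ϱ^s φ(ϱ))^p)^{1/p}. Then there exist c', c'' > 0, independent of k and ϱ, such that c' κ_k(s,φ,p,ϱ) ≤ κ_k(s_0,φ_0,p_0,ϱ)^{1−θ} · κ_k(s_1,φ_1,p_1,ϱ)^θ ≤ c'' κ_k(s,φ,p,ϱ) for all integers k ≥ 0 and all ϱ ≥ 1. -/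
open Filter Set

/-- A positive function on `[1,∞)` varies slowly at infinity in the sense of Karamata. -/
def SlowlyVarying (φ : ℝ → ℝ) : Prop :=
  ∀ lam : ℝ, 0 < lam → Tendsto (fun t => φ (lam * t) / φ t) atTop (nhds 1)

/-- The parameter-dependent weight `κ_k(s,φ,p,ϱ) = ((2^{sk} φ(2^k))^p + (ϱ^s φ(ϱ))^p)^{1/p}`. -/
noncomputable def kappa (s : ℝ) (φ : ℝ → ℝ) (p ϱ : ℝ) (k : ℕ) : ℝ :=
  (((2:ℝ) ^ (s * (k:ℝ)) * φ ((2:ℝ) ^ (k:ℕ))) ^ p + (ϱ ^ s * φ ϱ) ^ p) ^ (1 / p)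

noncomputable def hfun (φ : ℝ → ℝ) (x : ℝ) : ℝ := Real.log (φ (Real.exp (max x 0)))

lemma hfun_cont (φ : ℝ → ℝ) (hc : ContinuousOn φ (Ici 1)) (hpos : ∀ t, 1 ≤ t → 0 < φ t) :
    Continuous (hfun φ) := by
  have hmem : ∀ x : ℝ, Real.exp (max x 0) ∈ Ici (1:ℝ) := by
    intro x
    simpa using Real.one_le_exp (le_max_right x 0)
  have hcont : Continuous fun x => φ (Real.exp (max x 0)) :=
    hc.comp_continuous (Real.continuous_exp.comp (continuous_id.max continuous_const)) hmem
  exact hcont.log (fun x => (hpos _ (hmem x)).ne')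

lemma hfun_lim (φ : ℝ → ℝ) (hpos : ∀ t, 1 ≤ t → 0 < φ t) (hsv : SlowlyVarying φ)
    (y : ℝ) : Tendsto (fun x => hfun φ (x + y) - hfun φ x) atTop (nhds 0) := by
  have h1 : Tendsto (fun x : ℝ => φ (Real.exp y * Real.exp x) / φ (Real.exp x)) atTop (nhds 1) :=
    (hsv (Real.exp y) (Real.exp_pos y)).comp Real.tendsto_exp_atTop
  have h2 : Tendsto (fun x : ℝ => Real.log (φ (Real.exp y * Real.exp x) / φ (Real.exp x)))
      atTop (nhds 0) := by
    have := (Real.continuousAt_log one_ne_zero).tendsto.comp h1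
    simpa [Function.comp_def] using this
  refine h2.congr' ?_
  filter_upwards [eventually_ge_atTop (max 0 (-y))] with x hx
  have hx0 : 0 ≤ x := le_trans (le_max_left _ _) hx
  have hxy : 0 ≤ x + y := by
    have : -y ≤ x := le_trans (le_max_right _ _) hx
    linarith
  have e1 : Real.exp x ∈ Ici (1:ℝ) := by simpa using Real.one_le_exp hx0
  have e2 : (1:ℝ) ≤ Real.exp y * Real.exp x := by
    rw [← Real.exp_add]
    have : 0 ≤ y + x := by linarith
    simpa using Real.one_le_exp this
  rw [Real.log_div (hpos _ e2).ne' (hpos _ e1).ne']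
  simp only [hfun, max_eq_left hxy, max_eq_left hx0]
  rw [← Real.exp_add, add_comm y x]

lemma baire_interval (h : ℝ → ℝ) (hcont : Continuous h)
    (hlim : ∀ y : ℝ, Tendsto (fun x => h (x + y) - h x) atTop (nhds 0)) :
    ∃ (a b T : ℝ), a < b ∧ 0 ≤ a ∧ b ≤ 1 ∧
      ∀ y ∈ Icc a b, ∀ x : ℝ, T ≤ x → |h (x + y) - h x| ≤ 1 := by
  set X := Icc (0:ℝ) 1
  haveI : CompleteSpace X := (isClosed_Icc).completeSpace_coe
  set f : ℕ → Set X := fun n => {y : X | ∀ x : ℝ, (n:ℝ) ≤ x → |h (x + (y:ℝ)) - h x| ≤ 1} with hf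
  have hclosed : ∀ n, IsClosed (f n) := by
    intro n
    have : f n = ⋂ (x : ℝ), {y : X | (n:ℝ) ≤ x → |h (x + (y:ℝ)) - h x| ≤ 1} := by
      ext y; simp [hf, mem_iInter]
    rw [this]
    refine isClosed_iInter fun x => ?_
    by_cases hx : (n:ℝ) ≤ x
    · have : {y : X | (n:ℝ) ≤ x → |h (x + (y:ℝ)) - h x| ≤ 1}
          = {y : X | |h (x + (y:ℝ)) - h x| ≤ 1} := by
        ext y; simp [hx]
      rw [this]
      have hc : Continuous fun y : X => |h (x + (y:ℝ)) - h x| := by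
        exact ((hcont.comp (continuous_const.add continuous_subtype_val)).sub
          continuous_const).abs
      exact isClosed_le hc continuous_const
    · have : {y : X | (n:ℝ) ≤ x → |h (x + (y:ℝ)) - h x| ≤ 1} = univ := by
        ext y; simp [hx]
      rw [this]; exact isClosed_univ
  have hcover : (⋃ n, f n) = univ := by
    refine eq_univ_of_forall fun y => ?_
    have hev := Metric.tendsto_nhds.mp (hlim (y:ℝ)) 1 one_pos
    rw [eventually_atTop] at hev
    obtain ⟨N, hN⟩ := hev
    refine mem_iUnion.2 ⟨⌈N⌉₊, fun x hx => ?_⟩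
    have : N ≤ x := le_trans (Nat.le_ceil N) hx
    have := hN x this
    rw [Real.dist_eq, sub_zero] at this
    exact this.le
  obtain ⟨n, y₀, hy₀⟩ := nonempty_interior_of_iUnion_of_closed hclosed hcover
  rw [mem_interior_iff_mem_nhds, Metric.mem_nhds_iff] at hy₀
  obtain ⟨ε, hε, hball⟩ := hy₀
  set y0 : ℝ := (y₀ : ℝ)
  have hy0 : y0 ∈ Icc (0:ℝ) 1 := y₀.2
  set a : ℝ := max 0 (y0 - ε/2)
  set b : ℝ := min 1 (y0 + ε/2)
  have hab : a < b := by
    rcases max_cases 0 (y0 - ε/2) with ⟨ha, ha'⟩ | ⟨ha, ha'⟩ <;>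
      rcases min_cases 1 (y0 + ε/2) with ⟨hb, hb'⟩ | ⟨hb, hb'⟩ <;>
      simp only [a, b, ha, hb] <;> cases' hy0 with h1 h2 <;> linarith
  refine ⟨a, b, (n:ℝ), hab, le_max_left _ _, min_le_left _ _, fun y hy x hx => ?_⟩
  have hyX : y ∈ X := ⟨le_trans (le_max_left _ _) hy.1, le_trans hy.2 (min_le_left _ _)⟩
  have hdist : (⟨y, hyX⟩ : X) ∈ Metric.ball y₀ ε := by
    rw [Metric.mem_ball, Subtype.dist_eq, Real.dist_eq]
    have h1 : y0 - ε/2 ≤ y := le_trans (le_max_right _ _) hy.1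
    have h2 : y ≤ y0 + ε/2 := le_trans hy.2 (min_le_right _ _)
    rw [abs_lt]; constructor <;> simp only [Subtype.coe_mk] <;> linarith
  exact hball hdist x hx

lemma step2 (h : ℝ → ℝ) (hcont : Continuous h)
    (hlim : ∀ y : ℝ, Tendsto (fun x => h (x + y) - h x) atTop (nhds 0)) :
    ∃ δ T : ℝ, 0 < δ ∧ ∀ x : ℝ, T ≤ x → ∀ y ∈ Icc 0 δ, |h (x + y) - h x| ≤ 2 := by
  obtain ⟨a, b, T0, hab, ha0, hb1, key⟩ := baire_interval h hcont hlim
  refine ⟨b - a, T0 + 1, by linarith, fun x hx y hy => ?_⟩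
  have hxa : T0 ≤ x - a := by linarith [le_trans ha0 hab.le]
  have e1 : |h x - h (x - a)| ≤ 1 := by
    have := key a ⟨le_refl a, hab.le⟩ (x - a) hxa
    rwa [show x - a + a = x by ring] at this
  have e2 : |h (x + y) - h (x - a)| ≤ 1 := by
    have := key (a + y) ⟨by linarith [hy.1], by linarith [hy.2]⟩ (x - a) hxa
    rwa [show x - a + (a + y) = x + y by ring] at this
  rw [abs_le] at e1 e2 ⊢
  constructor <;> linarith [e1.1, e1.2, e2.1, e2.2]

lemma log_almost_mono (s : ℝ) (hs : 0 < s) (h : ℝ → ℝ) (hcont : Continuous h)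
    (hlim : ∀ y : ℝ, Tendsto (fun x => h (x + y) - h x) atTop (nhds 0)) :
    ∃ T : ℝ, ∀ x z : ℝ, T ≤ x → x ≤ z → s * x + h x - 2 ≤ s * z + h z := by
  obtain ⟨δ, T0, hδ, key⟩ := step2 h hcont hlim
  have hev := Metric.tendsto_nhds.mp (hlim δ) (s * δ) (mul_pos hs hδ)
  rw [eventually_atTop] at hev
  obtain ⟨T1, hT1⟩ := hev
  refine ⟨max T0 T1, ?_⟩
  have main : ∀ k : ℕ, ∀ x z : ℝ, max T0 T1 ≤ x → x ≤ z → z ≤ x + k * δ →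
      s * x + h x - 2 ≤ s * z + h z := by
    intro k
    induction k with
    | zero =>
      intro x z hx hxz hz
      push_cast at hz
      have : z = x := le_antisymm (by linarith) hxz
      subst this; linarith
    | succ k ih =>
      intro x z hx hxz hz
      by_cases hc : z ≤ x + k * δ
      · exact ih x z hx hxz hc
      · push_neg at hc
        by_cases hc2 : x + δ ≤ z
        · have hstep : s * x + h x ≤ s * (x + δ) + h (x + δ) := by
            have := hT1 x (le_trans (le_max_right _ _) hx)
            rw [Real.dist_eq, sub_zero, abs_lt] at this
            nlinarith [this.1]
          have := ih (x + δ) z (le_trans hx (by linarith)) hc2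
            (by push_cast at hz ⊢; linarith)
          linarith
        · push_neg at hc2
          have hk := key x (le_trans (le_max_left _ _) hx) (z - x) ⟨by linarith, by linarith⟩
          rw [show x + (z - x) = z by ring, abs_le] at hk
          have hsz : s * x ≤ s * z := by nlinarith
          linarith [hk.1]
  intro x z hx hxz
  refine main ⌈(z - x) / δ⌉₊ x z hx hxz ?_
  have h1 : (z - x) / δ ≤ (⌈(z - x) / δ⌉₊ : ℝ) := Nat.le_ceil _
  rw [div_le_iff₀ hδ] at h1
  linarith

theorem almost_increasing (s : ℝ) (hs : 0 < s) (φ : ℝ → ℝ)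
    (hc : ContinuousOn φ (Ici 1)) (hpos : ∀ t, 1 ≤ t → 0 < φ t) (hsv : SlowlyVarying φ) :
    ∃ c : ℝ, 0 < c ∧ ∀ t u : ℝ, 1 ≤ t → t ≤ u → c * (t ^ s * φ t) ≤ u ^ s * φ u := by
  obtain ⟨T, hT⟩ := log_almost_mono s hs (hfun φ) (hfun_cont φ hc hpos) (hfun_lim φ hpos hsv)
  set R := Real.exp (max T 0) with hRdef
  have hR1 : 1 ≤ R := Real.one_le_exp (le_max_right _ _)
  set ψ : ℝ → ℝ := fun t => t ^ s * φ t with hψdef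
  have hψpos : ∀ t, 1 ≤ t → 0 < ψ t := fun t ht =>
    mul_pos (Real.rpow_pos_of_pos (by linarith) s) (hpos t ht)
  have hψcont : ContinuousOn ψ (Icc 1 R) := by
    refine ContinuousOn.mul ?_ (hc.mono (fun x hx => hx.1))
    exact continuousOn_id.rpow_const (fun t ht => Or.inl (by intro h0; rw [id] at h0; linarith [ht.1]))
  have hne : (Icc (1:ℝ) R).Nonempty := ⟨1, left_mem_Icc.2 hR1⟩
  obtain ⟨tm, htm, hmin⟩ := isCompact_Icc.exists_isMinOn hne hψcont
  obtain ⟨tM, htM, hmax⟩ := isCompact_Icc.exists_isMaxOn hne hψcont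
  set μ := ψ tm with hμdef
  set ν := ψ tM with hνdef
  have hμpos : 0 < μ := hψpos tm htm.1
  have hνpos : 0 < ν := hψpos tM htM.1
  have hμν : μ ≤ ν := le_trans (isMinOn_iff.mp hmin 1 (left_mem_Icc.2 hR1))
    (isMaxOn_iff.mp hmax 1 (left_mem_Icc.2 hR1))
  -- key estimate for large arguments
  have key2 : ∀ t u : ℝ, R ≤ t → t ≤ u → Real.exp (-2) * ψ t ≤ ψ u := by
    intro t u hRt htu
    have ht1 : (1:ℝ) ≤ t := le_trans hR1 hRt
    have hu1 : (1:ℝ) ≤ u := le_trans ht1 htu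
    have ht0 : (0:ℝ) < t := by linarith
    have hu0 : (0:ℝ) < u := by linarith
    have hlogt : max T 0 ≤ Real.log t := by
      rw [hRdef] at hRt
      calc max T 0 = Real.log R := (Real.log_exp _).symm
        _ ≤ Real.log t := Real.log_le_log (Real.exp_pos _) hRt
    have hlogt0 : 0 ≤ Real.log t := le_trans (le_max_right _ _) hlogt
    have hlogu0 : 0 ≤ Real.log u := le_trans hlogt0 (Real.log_le_log ht0 htu)
    have hlog : ∀ v : ℝ, 1 ≤ v → 0 ≤ Real.log v →
        s * Real.log v + hfun φ (Real.log v) = Real.log (ψ v) := by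
      intro v hv hv0
      have hv0' : (0:ℝ) < v := by linarith
      rw [hfun, max_eq_left hv0, Real.exp_log hv0', hψdef]
      rw [Real.log_mul (Real.rpow_pos_of_pos hv0' s).ne' (hpos v hv).ne', Real.log_rpow hv0']
    have := hT (Real.log t) (Real.log u) (le_trans (le_max_left _ _) hlogt)
      (Real.log_le_log ht0 htu)
    rw [hlog t ht1 hlogt0, hlog u hu1 hlogu0] at this
    have : Real.exp (Real.log (ψ t) - 2) ≤ Real.exp (Real.log (ψ u)) :=
      Real.exp_le_exp.2 (by linarith)
    rwa [Real.exp_log (hψpos u hu1), Real.exp_sub, Real.exp_log (hψpos t ht1),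
      div_eq_mul_inv, ← Real.exp_neg, mul_comm] at this
  refine ⟨Real.exp (-2) * (μ / ν), by positivity, fun t u ht htu => ?_⟩
  have hu1 : (1:ℝ) ≤ u := le_trans ht htu
  have hE1 : Real.exp (-2:ℝ) ≤ 1 := Real.exp_le_one_iff.2 (by norm_num)
  have hEpos : 0 < Real.exp (-2:ℝ) := Real.exp_pos _
  have hψt : 0 < ψ t := hψpos t ht
  have hψu : 0 < ψ u := hψpos u hu1
  show Real.exp (-2) * (μ / ν) * ψ t ≤ ψ u
  set q : ℝ := μ / ν with hqdef
  have hq0 : 0 < q := div_pos hμpos hνpos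
  have hq1 : q ≤ 1 := div_le_one_of_le₀ hμν hνpos.le
  have hqν : q * ν = μ := div_mul_cancel₀ μ hνpos.ne'
  set e : ℝ := Real.exp (-2:ℝ)
  rcases le_or_gt R t with hRt | htR
  · have h1 := key2 t u hRt htu
    calc e * q * ψ t = e * ψ t * q := by ring
      _ ≤ e * ψ t * 1 := mul_le_mul_of_nonneg_left hq1 (by positivity)
      _ = e * ψ t := mul_one _
      _ ≤ ψ u := h1
  · rcases le_or_gt u R with huR | hRu
    · have h1 : μ ≤ ψ u := isMinOn_iff.mp hmin u ⟨hu1, huR⟩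
      have h2 : ψ t ≤ ν := isMaxOn_iff.mp hmax t ⟨ht, htR.le⟩
      calc e * q * ψ t ≤ 1 * (q * ψ t) := by
            rw [mul_assoc]; exact mul_le_mul_of_nonneg_right hE1 (by positivity)
        _ = q * ψ t := one_mul _
        _ ≤ q * ν := mul_le_mul_of_nonneg_left h2 hq0.le
        _ = μ := hqν
        _ ≤ ψ u := h1
    · have h1 := key2 R u le_rfl hRu.le
      have h2 : μ ≤ ψ R := isMinOn_iff.mp hmin R ⟨hR1, le_rfl⟩
      have h3 : ψ t ≤ ν := isMaxOn_iff.mp hmax t ⟨ht, htR.le⟩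
      calc e * q * ψ t = e * (q * ψ t) := mul_assoc _ _ _
        _ ≤ e * (q * ν) := mul_le_mul_of_nonneg_left
            (mul_le_mul_of_nonneg_left h3 hq0.le) hEpos.le
        _ = e * μ := by rw [hqν]
        _ ≤ e * ψ R := mul_le_mul_of_nonneg_left h2 hEpos.le
        _ ≤ ψ u := h1

lemma rpow_inv_self {B p : ℝ} (hB : 0 ≤ B) (hp : p ≠ 0) : (B ^ p) ^ (1/p) = B := by
  rw [← Real.rpow_mul hB, mul_one_div_cancel hp, Real.rpow_one]

lemma two_term (p : ℝ) (hp : 0 < p) (A B c : ℝ) (hA : 0 < A) (hB : 0 < B) (hc : 0 < c)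
    (hAB : c * A ≤ B) :
    B ≤ (A ^ p + B ^ p) ^ (1/p) ∧
      (A ^ p + B ^ p) ^ (1/p) ≤ (1 + (1/c) ^ p) ^ (1/p) * B := by
  have hp' : (0:ℝ) ≤ 1/p := by positivity
  constructor
  · calc B = (B ^ p) ^ (1/p) := (rpow_inv_self hB.le hp.ne').symm
      _ ≤ (A ^ p + B ^ p) ^ (1/p) :=
        Real.rpow_le_rpow (Real.rpow_nonneg hB.le p)
          (le_add_of_nonneg_left (Real.rpow_nonneg hA.le p)) hp'
  · have h1 : A ≤ (1/c) * B := by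
      rw [one_div, inv_mul_eq_div, le_div_iff₀ hc, mul_comm]; exact hAB
    have h2 : A ^ p ≤ ((1/c) * B) ^ p := Real.rpow_le_rpow hA.le h1 hp.le
    have h3 : ((1/c) * B) ^ p = (1/c) ^ p * B ^ p := Real.mul_rpow (by positivity) hB.le
    have h4 : A ^ p + B ^ p ≤ (1 + (1/c) ^ p) * B ^ p := by
      rw [add_mul, one_mul]; rw [h3] at h2; linarith
    calc (A ^ p + B ^ p) ^ (1/p) ≤ ((1 + (1/c) ^ p) * B ^ p) ^ (1/p) :=
          Real.rpow_le_rpow (by positivity) h4 hp'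
      _ = (1 + (1/c) ^ p) ^ (1/p) * B := by
          rw [Real.mul_rpow (by positivity) (Real.rpow_nonneg hB.le p),
            rpow_inv_self hB.le hp.ne']

lemma kappa_eq (σ : ℝ) (f : ℝ → ℝ) (pp ϱ : ℝ) (k : ℕ) :
    kappa σ f pp ϱ k = (((min ((2:ℝ)^(k:ℕ)) ϱ) ^ σ * f (min ((2:ℝ)^(k:ℕ)) ϱ)) ^ pp
      + ((max ((2:ℝ)^(k:ℕ)) ϱ) ^ σ * f (max ((2:ℝ)^(k:ℕ)) ϱ)) ^ pp) ^ (1/pp) := by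
  have h2 : (2:ℝ) ^ (σ * (k:ℝ)) = ((2:ℝ)^(k:ℕ)) ^ σ := by
    rw [mul_comm, Real.rpow_mul (by norm_num), Real.rpow_natCast]
  rw [kappa, h2]
  rcases le_total ((2:ℝ)^(k:ℕ)) ϱ with h | h
  · rw [min_eq_left h, max_eq_right h]
  · rw [min_eq_right h, max_eq_left h, add_comm]

lemma psi_interp (s₀ s₁ θ s : ℝ) (φ₀ φ₁ φ : ℝ → ℝ)
    (hs : s = (1 - θ) * s₀ + θ * s₁) (hφ : ∀ t, φ t = φ₀ t ^ (1 - θ) * φ₁ t ^ θ)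
    (t : ℝ) (ht : 0 < t) (h₀ : 0 ≤ φ₀ t) (h₁ : 0 ≤ φ₁ t) :
    t ^ s * φ t = (t ^ s₀ * φ₀ t) ^ (1 - θ) * (t ^ s₁ * φ₁ t) ^ θ := by
  have e1 : t ^ s = (t ^ s₀) ^ (1 - θ) * (t ^ s₁) ^ θ := by
    rw [hs, Real.rpow_add ht, mul_comm (1-θ) s₀, mul_comm θ s₁,
      Real.rpow_mul ht.le, Real.rpow_mul ht.le]
  rw [e1, hφ, Real.mul_rpow (Real.rpow_nonneg ht.le s₀) h₀,
    Real.mul_rpow (Real.rpow_nonneg ht.le s₁) h₁]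
  ring

theorem stmt7 (s₀ s₁ θ p₀ p₁ : ℝ) (hs₀ : 0 < s₀) (hs₁ : 0 < s₁)
    (hθ : 0 < θ) (hθ' : θ < 1) (hp₀ : 1 < p₀) (hp₁ : 1 < p₁)
    (φ₀ φ₁ : ℝ → ℝ)
    (hc₀ : ContinuousOn φ₀ (Ici 1)) (hpos₀ : ∀ t, 1 ≤ t → 0 < φ₀ t) (hsv₀ : SlowlyVarying φ₀)
    (hc₁ : ContinuousOn φ₁ (Ici 1)) (hpos₁ : ∀ t, 1 ≤ t → 0 < φ₁ t) (hsv₁ : SlowlyVarying φ₁)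
    (s p : ℝ) (φ : ℝ → ℝ)
    (hs : s = (1 - θ) * s₀ + θ * s₁) (hp : 1 / p = (1 - θ) / p₀ + θ / p₁)
    (hφ : ∀ t, φ t = φ₀ t ^ (1 - θ) * φ₁ t ^ θ) :
    ∃ c' : ℝ, 0 < c' ∧ ∃ c'' : ℝ, 0 < c'' ∧ ∀ (k : ℕ) (ϱ : ℝ), 1 ≤ ϱ →
      c' * kappa s φ p ϱ k ≤ kappa s₀ φ₀ p₀ ϱ k ^ (1 - θ) * kappa s₁ φ₁ p₁ ϱ k ^ θ ∧
      kappa s₀ φ₀ p₀ ϱ k ^ (1 - θ) * kappa s₁ φ₁ p₁ ϱ k ^ θ ≤ c'' * kappa s φ p ϱ k := by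
  have hθ1 : (0:ℝ) ≤ 1 - θ := by linarith
  have hp₀' : (0:ℝ) < p₀ := by linarith
  have hp₁' : (0:ℝ) < p₁ := by linarith
  have hp0 : 0 < p := by
    have h1 : 0 < 1/p := by
      rw [hp]
      have := div_pos (by linarith : (0:ℝ) < 1 - θ) hp₀'
      have := div_pos hθ hp₁'
      linarith
    exact one_div_pos.mp h1
  obtain ⟨c₀, hcp₀, hai₀⟩ := almost_increasing s₀ hs₀ φ₀ hc₀ hpos₀ hsv₀
  obtain ⟨c₁, hcp₁, hai₁⟩ := almost_increasing s₁ hs₁ φ₁ hc₁ hpos₁ hsv₁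
  set c : ℝ := c₀ ^ (1-θ) * c₁ ^ θ with hcdef
  have hcpos : 0 < c := by positivity
  set D₀ : ℝ := (1 + (1/c₀) ^ p₀) ^ (1/p₀) with hD₀def
  set D₁ : ℝ := (1 + (1/c₁) ^ p₁) ^ (1/p₁) with hD₁def
  set D : ℝ := (1 + (1/c) ^ p) ^ (1/p) with hDdef
  have hD₀ : 0 < D₀ := Real.rpow_pos_of_pos (by positivity) _
  have hD₁ : 0 < D₁ := Real.rpow_pos_of_pos (by positivity) _
  have hD : 0 < D := Real.rpow_pos_of_pos (by positivity) _
  refine ⟨1/D, by positivity, D₀ ^ (1-θ) * D₁ ^ θ, by positivity, fun k ϱ hϱ => ?_⟩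
  set t : ℝ := (2:ℝ) ^ (k:ℕ) with htdef
  have ht : (1:ℝ) ≤ t := one_le_pow₀ (by norm_num)
  set m : ℝ := min t ϱ with hmdef
  set M : ℝ := max t ϱ with hMdef
  have hm : (1:ℝ) ≤ m := le_min ht hϱ
  have hM : (1:ℝ) ≤ M := le_trans hm min_le_max
  have hm0 : (0:ℝ) < m := by linarith
  have hM0 : (0:ℝ) < M := by linarith
  set A₀ : ℝ := m ^ s₀ * φ₀ m
  set B₀ : ℝ := M ^ s₀ * φ₀ M
  set A₁ : ℝ := m ^ s₁ * φ₁ m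
  set B₁ : ℝ := M ^ s₁ * φ₁ M
  have hA₀ : 0 < A₀ := mul_pos (Real.rpow_pos_of_pos hm0 _) (hpos₀ m hm)
  have hB₀ : 0 < B₀ := mul_pos (Real.rpow_pos_of_pos hM0 _) (hpos₀ M hM)
  have hA₁ : 0 < A₁ := mul_pos (Real.rpow_pos_of_pos hm0 _) (hpos₁ m hm)
  have hB₁ : 0 < B₁ := mul_pos (Real.rpow_pos_of_pos hM0 _) (hpos₁ M hM)
  have htt₀ := two_term p₀ hp₀' A₀ B₀ c₀ hA₀ hB₀ hcp₀ (hai₀ m M hm min_le_max)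
  have htt₁ := two_term p₁ hp₁' A₁ B₁ c₁ hA₁ hB₁ hcp₁ (hai₁ m M hm min_le_max)
  -- interpolated ψ values
  have hiA : m ^ s * φ m = A₀ ^ (1-θ) * A₁ ^ θ :=
    psi_interp s₀ s₁ θ s φ₀ φ₁ φ hs hφ m hm0 (hpos₀ m hm).le (hpos₁ m hm).le
  have hiB : M ^ s * φ M = B₀ ^ (1-θ) * B₁ ^ θ :=
    psi_interp s₀ s₁ θ s φ₀ φ₁ φ hs hφ M hM0 (hpos₀ M hM).le (hpos₁ M hM).le
  have hA : 0 < m ^ s * φ m := by rw [hiA]; positivity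
  have hB : 0 < M ^ s * φ M := by rw [hiB]; positivity
  have hABc : c * (m ^ s * φ m) ≤ M ^ s * φ M := by
    rw [hiA, hiB, hcdef]
    have e₀ : (c₀ * A₀) ^ (1-θ) ≤ B₀ ^ (1-θ) :=
      Real.rpow_le_rpow (by positivity) (hai₀ m M hm min_le_max) hθ1
    have e₁ : (c₁ * A₁) ^ θ ≤ B₁ ^ θ :=
      Real.rpow_le_rpow (by positivity) (hai₁ m M hm min_le_max) hθ.le
    rw [Real.mul_rpow hcp₀.le hA₀.le] at e₀
    rw [Real.mul_rpow hcp₁.le hA₁.le] at e₁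
    calc c₀ ^ (1-θ) * c₁ ^ θ * (A₀ ^ (1-θ) * A₁ ^ θ)
        = (c₀ ^ (1-θ) * A₀ ^ (1-θ)) * (c₁ ^ θ * A₁ ^ θ) := by ring
      _ ≤ B₀ ^ (1-θ) * B₁ ^ θ := by
          apply mul_le_mul e₀ e₁ (by positivity) (by positivity)
  have htt := two_term p hp0 (m ^ s * φ m) (M ^ s * φ M) c hA hB hcpos hABc
  rw [kappa_eq s φ p ϱ k, kappa_eq s₀ φ₀ p₀ ϱ k, kappa_eq s₁ φ₁ p₁ ϱ k]
  rw [← htdef, ← hmdef, ← hMdef]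
  set κ : ℝ := ((m ^ s * φ m) ^ p + (M ^ s * φ M) ^ p) ^ (1/p)
  set κ₀ : ℝ := (A₀ ^ p₀ + B₀ ^ p₀) ^ (1/p₀)
  set κ₁ : ℝ := (A₁ ^ p₁ + B₁ ^ p₁) ^ (1/p₁)
  have hκ₀ : 0 < κ₀ := lt_of_lt_of_le hB₀ htt₀.1
  have hκ₁ : 0 < κ₁ := lt_of_lt_of_le hB₁ htt₁.1
  constructor
  · -- lower bound
    have h1 : κ ≤ D * (M ^ s * φ M) := htt.2
    have h2 : B₀ ^ (1-θ) * B₁ ^ θ ≤ κ₀ ^ (1-θ) * κ₁ ^ θ := by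
      apply mul_le_mul (Real.rpow_le_rpow hB₀.le htt₀.1 hθ1)
        (Real.rpow_le_rpow hB₁.le htt₁.1 hθ.le) (by positivity) (by positivity)
    calc 1/D * κ ≤ 1/D * (D * (M ^ s * φ M)) := by
          apply mul_le_mul_of_nonneg_left h1 (by positivity)
      _ = M ^ s * φ M := by field_simp
      _ = B₀ ^ (1-θ) * B₁ ^ θ := hiB
      _ ≤ κ₀ ^ (1-θ) * κ₁ ^ θ := h2
  · -- upper bound
    have h1 : κ₀ ^ (1-θ) ≤ (D₀ * B₀) ^ (1-θ) := Real.rpow_le_rpow hκ₀.le htt₀.2 hθ1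
    have h2 : κ₁ ^ θ ≤ (D₁ * B₁) ^ θ := Real.rpow_le_rpow hκ₁.le htt₁.2 hθ.le
    calc κ₀ ^ (1-θ) * κ₁ ^ θ ≤ (D₀ * B₀) ^ (1-θ) * (D₁ * B₁) ^ θ := by
          apply mul_le_mul h1 h2 (by positivity) (by positivity)
      _ = D₀ ^ (1-θ) * D₁ ^ θ * (B₀ ^ (1-θ) * B₁ ^ θ) := by
          rw [Real.mul_rpow hD₀.le hB₀.le, Real.mul_rpow hD₁.le hB₁.le]; ring
      _ = D₀ ^ (1-θ) * D₁ ^ θ * (M ^ s * φ M) := by rw [hiB]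
      _ ≤ D₀ ^ (1-θ) * D₁ ^ θ * κ := by
          apply mul_le_mul_of_nonneg_left htt.1 (by positivity)
end

section
/- Let X_0, X_1, Y_0, Y_1 be Banach spaces with dense continuous embeddings X_1 ↪ X_0 and Y_1 ↪ Y_0. Suppose a linear map T defined on X_0 restricts to bounded Fredholm operators T : X_0 → Y_0 and T : X_1 → Y_1 having a common kernel N and the same index κ. Then for every θ ∈ (0,1), the operator T : [X_0,X_1]_θ → [Y_0,Y_1]_θ (obtained by complex interpolation) is a bounded Fredholm operator with kernel N, index κ, and range equal to [Y_0,Y_1]_θ ∩ T(X_0). -/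
open Filter Set Complex

/-- A Banach space `X₁` densely and continuously embedded in the ambient Banach space `X₀`:
a dense submodule together with a complete norm `n` dominating (up to a constant) the
ambient norm. -/
structure DenseSubNorm (X : Type*) [NormedAddCommGroup X] [NormedSpace ℂ X] where
  carrier : Submodule ℂ X
  dense : Dense (carrier : Set X)
  n : X → ℝ
  n_nonneg : ∀ x, 0 ≤ n x
  n_eq_zero : ∀ x ∈ carrier, n x = 0 → x = 0
  n_add : ∀ x ∈ carrier, ∀ y ∈ carrier, n (x + y) ≤ n x + n y
  n_smul : ∀ (c : ℂ), ∀ x ∈ carrier, n (c • x) = ‖c‖ * n x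
  embed : ∃ C : ℝ, 0 < C ∧ ∀ x ∈ carrier, ‖x‖ ≤ C * n x
  complete : ∀ f : ℕ → X, (∀ k, f k ∈ carrier) →
    (∀ ε : ℝ, 0 < ε → ∃ N, ∀ m ≥ N, ∀ l ≥ N, n (f m - f l) < ε) →
    ∃ x ∈ carrier, Tendsto (fun m => n (f m - x)) atTop (nhds 0)

/-- The closed strip `0 ≤ Re z ≤ 1`. -/
def strip : Set ℂ := {z : ℂ | 0 ≤ z.re ∧ z.re ≤ 1}

/-- Admissible function for Calderón's complex interpolation method for the couple
`(X₀, X₁)` (where `X₁` is given by `S`): bounded continuous on the strip, analytic in its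
interior, boundary values on `Re z = 0` bounded by `M` in `X₀` and on `Re z = 1` lying in
`X₁` with `n`-norm at most `M`, and value `x` at `θ`. -/
def Adm {X : Type*} [NormedAddCommGroup X] [NormedSpace ℂ X] (S : DenseSubNorm X)
    (θ : ℝ) (x : X) (M : ℝ) (F : ℂ → X) : Prop :=
  ContinuousOn F strip ∧ DifferentiableOn ℂ F (interior strip) ∧
  (∃ B : ℝ, ∀ z ∈ strip, ‖F z‖ ≤ B) ∧
  (∀ t : ℝ, F (1 + (t : ℂ) * I) ∈ S.carrier) ∧
  (∀ t : ℝ, ‖F ((t : ℂ) * I)‖ ≤ M) ∧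
  (∀ t : ℝ, S.n (F (1 + (t : ℂ) * I)) ≤ M) ∧
  F (θ : ℂ) = x

/-- The complex interpolation space `[X₀, X₁]_θ`, as a subset of `X₀`. -/
def interpSet {X : Type*} [NormedAddCommGroup X] [NormedSpace ℂ X] (S : DenseSubNorm X)
    (θ : ℝ) : Set X :=
  {x : X | ∃ M : ℝ, 0 ≤ M ∧ ∃ F : ℂ → X, Adm S θ x M F}

/-- The complex interpolation norm on `[X₀, X₁]_θ`. -/
noncomputable def interpNorm {X : Type*} [NormedAddCommGroup X] [NormedSpace ℂ X]
    (S : DenseSubNorm X) (θ : ℝ) (x : X) : ℝ :=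
  sInf {M : ℝ | 0 ≤ M ∧ ∃ F : ℂ → X, Adm S θ x M F}

set_option maxHeartbeats 1600000
set_option synthInstance.maxHeartbeats 800000

section AuxiliaryMachinery

variable {X Y : Type*} [NormedAddCommGroup X] [NormedSpace ℂ X]
  [NormedAddCommGroup Y] [NormedSpace ℂ Y]

namespace DenseSubNorm

lemma n_zero (S : DenseSubNorm X) : S.n 0 = 0 := by
  have h := S.n_smul 0 0 (zero_mem _)
  simpa using h

lemma n_neg (S : DenseSubNorm X) {x : X} (hx : x ∈ S.carrier) : S.n (-x) = S.n x := by
  have h := S.n_smul (-1) x hx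
  simpa using h

lemma n_sub (S : DenseSubNorm X) {x y : X} (hx : x ∈ S.carrier) (hy : y ∈ S.carrier) :
    S.n (x - y) ≤ S.n x + S.n y := by
  rw [sub_eq_add_neg]
  exact (S.n_add x hx (-y) (neg_mem hy)).trans (by rw [S.n_neg hy])

end DenseSubNorm

lemma n_sum_le (S : DenseSubNorm X) {ι : Type*} (s : Finset ι) (f : ι → X)
    (hf : ∀ i ∈ s, f i ∈ S.carrier) :
    S.n (∑ i ∈ s, f i) ≤ ∑ i ∈ s, S.n (f i) := by
  classical
  induction s using Finset.induction_on with
  | empty => simp [S.n_zero]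
  | insert a s' hnot ih =>
    rw [Finset.sum_insert hnot, Finset.sum_insert hnot]
    refine (S.n_add _ (hf a (Finset.mem_insert_self a s')) _
      (Submodule.sum_mem _ fun i hi => hf i (Finset.mem_insert_of_mem hi))).trans ?_
    exact add_le_add le_rfl (ih fun i hi => hf i (Finset.mem_insert_of_mem hi))

/-- On a finite-dimensional submodule contained in the carrier, the `n`-norm is
dominated by the ambient norm. -/
lemma findim_n_bound (S : DenseSubNorm X) (M : Submodule ℂ X) [FiniteDimensional ℂ M]
    (hM : (M : Set X) ⊆ S.carrier) :
    ∃ C : ℝ, 0 ≤ C ∧ ∀ m ∈ M, S.n m ≤ C * ‖m‖ := by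
  classical
  set d := Module.finrank ℂ M
  set b : Module.Basis (Fin d) ℂ M := Module.finBasis ℂ M
  set coord : Fin d → (M →L[ℂ] ℂ) := fun i => LinearMap.toContinuousLinearMap (b.coord i)
  refine ⟨∑ i, ‖coord i‖ * S.n ((b i : X)), Finset.sum_nonneg fun i _ =>
    mul_nonneg (ContinuousLinearMap.opNorm_nonneg _) (S.n_nonneg _), ?_⟩
  intro m hm
  have hrepr : ((⟨m, hm⟩ : M) : X) = ∑ i, (b.coord i ⟨m, hm⟩) • ((b i : X)) := by
    conv_lhs => rw [← b.sum_repr ⟨m, hm⟩]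
    push_cast
    rfl
  calc S.n m = S.n (∑ i, (b.coord i ⟨m, hm⟩) • ((b i : X))) := by rw [← hrepr]
    _ ≤ ∑ i, S.n ((b.coord i ⟨m, hm⟩) • ((b i : X))) :=
        n_sum_le S _ _ fun i _ => Submodule.smul_mem _ _ (hM (b i).2)
    _ ≤ ∑ i, (‖coord i‖ * S.n ((b i : X))) * ‖m‖ := by
        refine Finset.sum_le_sum fun i _ => ?_
        rw [S.n_smul _ _ (hM (b i).2)]
        have h1 : ‖b.coord i ⟨m, hm⟩‖ ≤ ‖coord i‖ * ‖(⟨m, hm⟩ : M)‖ :=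
          (coord i).le_opNorm _
        have h2 : ‖(⟨m, hm⟩ : M)‖ = ‖m‖ := rfl
        rw [h2] at h1
        calc ‖b.coord i ⟨m, hm⟩‖ * S.n ((b i : X))
            ≤ (‖coord i‖ * ‖m‖) * S.n ((b i : X)) :=
              mul_le_mul_of_nonneg_right h1 (S.n_nonneg _)
          _ = (‖coord i‖ * S.n ((b i : X))) * ‖m‖ := by ring
    _ = (∑ i, ‖coord i‖ * S.n ((b i : X))) * ‖m‖ := by rw [Finset.sum_mul]


/-- The subspace `X₁` as a type. -/
def E1 (S : DenseSubNorm X) : Type _ := ↥S.carrier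

instance (S : DenseSubNorm X) : AddCommGroup (E1 S) :=
  inferInstanceAs (AddCommGroup ↥S.carrier)
instance (S : DenseSubNorm X) : Module ℂ (E1 S) :=
  inferInstanceAs (Module ℂ ↥S.carrier)

/-- Inclusion of `X₁` into `X₀`, as a linear map. -/
def E1.valL (S : DenseSubNorm X) : E1 S →ₗ[ℂ] X := S.carrier.subtype

lemma E1.valL_mem {S : DenseSubNorm X} (x : E1 S) : E1.valL S x ∈ S.carrier :=
  (show ↥S.carrier from x).2

lemma E1.valL_injective (S : DenseSubNorm X) : Function.Injective (E1.valL S) :=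
  Subtype.val_injective

noncomputable instance (S : DenseSubNorm X) : NormedAddCommGroup (E1 S) :=
  AddGroupNorm.toNormedAddCommGroup
    { toFun := fun x => S.n (E1.valL S x)
      map_zero' := by simpa using S.n_zero
      add_le' := fun x y => by
        simpa using S.n_add _ (E1.valL_mem x) _ (E1.valL_mem y)
      neg' := fun x => by simpa using S.n_neg (E1.valL_mem x)
      eq_zero_of_map_eq_zero' := fun x hx => by
        have := S.n_eq_zero _ (E1.valL_mem x) hx
        exact E1.valL_injective S (by simpa using this) }

lemma E1.norm_def {S : DenseSubNorm X} (x : E1 S) : ‖x‖ = S.n (E1.valL S x) := rfl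

noncomputable instance (S : DenseSubNorm X) : NormedSpace ℂ (E1 S) where
  norm_smul_le c x := by
    rw [E1.norm_def, E1.norm_def, map_smul]
    exact le_of_eq (S.n_smul c _ (E1.valL_mem x))

instance (S : DenseSubNorm X) : CompleteSpace (E1 S) := by
  apply Metric.complete_of_cauchySeq_tendsto
  intro u hu
  have hcau : ∀ ε : ℝ, 0 < ε → ∃ N, ∀ m ≥ N, ∀ l ≥ N,
      S.n (E1.valL S (u m) - E1.valL S (u l)) < ε := by
    intro ε hε
    rcases Metric.cauchySeq_iff.1 hu ε hε with ⟨N, hN⟩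
    refine ⟨N, fun m hm l hl => ?_⟩
    have := hN m hm l hl
    rw [dist_eq_norm] at this
    simpa [E1.norm_def, map_sub] using this
  obtain ⟨x, hx, hlim⟩ := S.complete (fun k => E1.valL S (u k)) (fun k => E1.valL_mem _) hcau
  let y : E1 S := ⟨x, hx⟩
  refine ⟨y, ?_⟩
  rw [tendsto_iff_norm_sub_tendsto_zero]
  convert hlim using 2 with m
  exact rfl

lemma closedCompl_proj {p : Submodule ℂ X} (h : p.ClosedComplemented) :
    ∃ P : X →L[ℂ] X, (∀ x, P x ∈ p) ∧ (∀ x ∈ p, P x = x) ∧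
      IsCompl p (LinearMap.ker (P : X →ₗ[ℂ] X)) := by
  obtain ⟨f, hf⟩ := h
  refine ⟨p.subtypeL.comp f, fun x => (f x).2, fun x hx => by
    simpa using congrArg Subtype.val (hf ⟨x, hx⟩), ?_⟩
  constructor
  · rw [disjoint_iff]
    apply Submodule.eq_bot_iff _ |>.2
    rintro x ⟨hx1, hx2⟩
    have h1 : p.subtypeL.comp f x = x := by simpa using congrArg Subtype.val (hf ⟨x, hx1⟩)
    have h2 : p.subtypeL.comp f x = 0 := hx2
    rw [h2] at h1; exact h1.symm
  · rw [codisjoint_iff]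
    apply Submodule.eq_top_iff'.2
    intro x
    have hker : x - p.subtypeL.comp f x ∈ LinearMap.ker ((p.subtypeL.comp f : X →L[ℂ] X) : X →ₗ[ℂ] X) := by
      rw [LinearMap.mem_ker, map_sub]
      have : p.subtypeL.comp f ((p.subtypeL.comp f) x) = p.subtypeL.comp f x := by
        simpa using congrArg Subtype.val (hf (f x))
      rw [ContinuousLinearMap.coe_coe, this, sub_self]
    exact Submodule.mem_sup.2 ⟨p.subtypeL.comp f x, (f x).2, x - p.subtypeL.comp f x, hker,
      by abel⟩

/-- Bounded right inverse for `T : X₁ → Y₁` on its range, via the open mapping theorem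
in the Banach spaces `(X₁, n)`, `(Y₁, n)`. -/
lemma right_inverse_bound [CompleteSpace X] [CompleteSpace Y]
    (SX : DenseSubNorm X) (SY : DenseSubNorm Y) (T : X →L[ℂ] Y)
    (hT1mem : ∀ x ∈ SX.carrier, T x ∈ SY.carrier)
    (hT1bdd : ∃ M : ℝ, 0 ≤ M ∧ ∀ x ∈ SX.carrier, SY.n (T x) ≤ M * SX.n x)
    (N : Submodule ℂ X) (hNfin : FiniteDimensional ℂ N)
    (hker : (N : Set X) = {x : X | T x = 0})
    (M₁ : Submodule ℂ Y) (hM₁fin : FiniteDimensional ℂ M₁)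
    (hM₁sub : (M₁ : Set Y) ⊆ SY.carrier)
    (hM₁dec : ∀ y ∈ SY.carrier, ∃ m ∈ M₁, y - m ∈ T '' (SX.carrier : Set X))
    (hM₁inj : ∀ m ∈ M₁, m ∈ T '' (SX.carrier : Set X) → m = 0) :
    ∃ C : ℝ, 0 ≤ C ∧ ∀ v ∈ T '' (SX.carrier : Set X),
      ∃ x ∈ SX.carrier, T x = v ∧ SX.n x ≤ C * SY.n v := by
  classical
  obtain ⟨MB, hMB0, hMB⟩ := hT1bdd
  -- the operator T₁ : X₁ → Y₁
  set T₁l : E1 SX →ₗ[ℂ] E1 SY :=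
    LinearMap.codRestrict SY.carrier ((T : X →ₗ[ℂ] Y).comp (E1.valL SX))
      (fun x => hT1mem _ (E1.valL_mem x)) with hT₁l
  have hT₁lval : ∀ x : E1 SX, E1.valL SY (T₁l x) = T (E1.valL SX x) := fun x => rfl
  set T₁ : E1 SX →L[ℂ] E1 SY := T₁l.mkContinuous MB (fun x => by
    rw [E1.norm_def, E1.norm_def, hT₁lval]
    exact hMB _ (E1.valL_mem x)) with hT₁def
  have hT₁val : ∀ x : E1 SX, E1.valL SY (T₁ x) = T (E1.valL SX x) := fun x => rfl
  -- kernel of T₁ is finite dimensional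
  set K := LinearMap.ker (T₁ : E1 SX →ₗ[ℂ] E1 SY) with hK
  haveI : FiniteDimensional ℂ N := hNfin
  haveI hKfin : FiniteDimensional ℂ K := by
    set g : K →ₗ[ℂ] N := LinearMap.codRestrict N
      ((E1.valL SX).comp K.subtype) (fun k => by
        have hk : T₁ k.1 = 0 := k.2
        have : T (E1.valL SX k.1) = 0 := by rw [← hT₁val]; rw [hk]; rfl
        have hmem : E1.valL SX k.1 ∈ (N : Set X) := by rw [hker]; exact this
        exact hmem) with hg
    have hginj : Function.Injective g := by
      intro a b hab
      have h' := Subtype.ext_iff.1 hab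
      exact Subtype.ext (E1.valL_injective SX h')
    exact FiniteDimensional.of_injective g hginj
  -- closed complement W₁ of K in X₁
  obtain ⟨P₁, hP₁mem, hP₁id, hP₁compl⟩ :=
    closedCompl_proj (Submodule.ClosedComplemented.of_finiteDimensional K)
  set W₁ := LinearMap.ker (P₁ : E1 SX →ₗ[ℂ] E1 SX) with hW₁
  have hW₁closed : IsClosed (W₁ : Set (E1 SX)) := ContinuousLinearMap.isClosed_ker P₁
  haveI : CompleteSpace W₁ := hW₁closed.completeSpace_coe
  -- M₁ pulled back to Y₁
  set M₁e : Submodule ℂ (E1 SY) := M₁.comap (E1.valL SY) with hM₁e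
  haveI hM₁efin : FiniteDimensional ℂ M₁e := by
    haveI := hM₁fin
    set g : M₁e →ₗ[ℂ] M₁ := LinearMap.codRestrict M₁
      ((E1.valL SY).comp M₁e.subtype) (fun k => k.2) with hg
    have hginj : Function.Injective g := by
      intro a b hab
      have h' := Subtype.ext_iff.1 hab
      exact Subtype.ext (E1.valL_injective SY h')
    exact FiniteDimensional.of_injective g hginj
  haveI : CompleteSpace M₁e := FiniteDimensional.complete ℂ M₁e
  -- the equivalence W₁ × M₁e ≃L Y₁
  set g : (W₁ × M₁e) →L[ℂ] E1 SY := (T₁.comp W₁.subtypeL).coprod M₁e.subtypeL with hgdef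
  have hgapp : ∀ p : W₁ × M₁e, g p = T₁ p.1.1 + p.2.1 := fun p => rfl
  have hgker : LinearMap.ker (g : (W₁ × M₁e) →ₗ[ℂ] E1 SY) = ⊥ := by
    rw [LinearMap.ker_eq_bot']
    rintro ⟨w, m⟩ hp
    have hp' : T₁ w.1 + m.1 = 0 := hp
    have hval : T (E1.valL SX w.1) + E1.valL SY m.1 = 0 := by
      have h := congrArg (E1.valL SY) hp'
      rw [map_add, hT₁val] at h
      simpa using h
    have hTw : T (E1.valL SX w.1) = -(E1.valL SY m.1) := by
      rw [eq_neg_iff_add_eq_zero]; exact hval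
    have hmval0 : E1.valL SY m.1 = 0 := by
      have hmem : -(E1.valL SY m.1) ∈ T '' (SX.carrier : Set X) :=
        ⟨E1.valL SX w.1, E1.valL_mem _, hTw⟩
      have := hM₁inj _ (neg_mem m.2) hmem
      simpa using this
    have hm0 : m = 0 := Subtype.ext (E1.valL_injective SY (by simpa using hmval0))
    have hw0 : w = 0 := by
      have hT₁w : T₁ w.1 = 0 := by
        rw [hm0] at hp'
        simpa using hp'
      have hwK : w.1 ∈ K := hT₁w
      have : w.1 ∈ K ⊓ W₁ := ⟨hwK, w.2⟩
      rw [hP₁compl.inf_eq_bot] at this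
      exact Subtype.ext this
    rw [hm0, hw0]; rfl
  have hgrange : LinearMap.range (g : (W₁ × M₁e) →ₗ[ℂ] E1 SY) = ⊤ := by
    rw [LinearMap.range_eq_top, ContinuousLinearMap.coe_coe]
    intro y
    obtain ⟨m, hmM, x, hxc, hTx⟩ := hM₁dec (E1.valL SY y) (E1.valL_mem y)
    set xe : E1 SX := ⟨x, hxc⟩ with hxe
    set we : E1 SX := xe - P₁ xe with hwe
    have hweW : we ∈ W₁ := by
      rw [LinearMap.mem_ker, map_sub, ContinuousLinearMap.coe_coe]
      have : P₁ (P₁ xe) = P₁ xe := hP₁id _ (hP₁mem xe)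
      rw [this, sub_self]
    have hT₁we : T₁ we = T₁ xe := by
      rw [hwe, map_sub]
      have hPK : P₁ xe ∈ K := hP₁mem xe
      rw [LinearMap.mem_ker, ContinuousLinearMap.coe_coe] at hPK
      rw [hPK, sub_zero]
    set me : E1 SY := ⟨m, hM₁sub hmM⟩ with hme
    have hmeM : me ∈ M₁e := by
      show E1.valL SY me ∈ M₁
      exact hmM
    refine ⟨(⟨we, hweW⟩, ⟨me, hmeM⟩), ?_⟩
    apply E1.valL_injective SY
    rw [hgapp]
    simp only [map_add]
    rw [hT₁val]
    have hvalwe : T (E1.valL SX we) = T x := by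
      have h := congrArg (E1.valL SY) hT₁we
      rw [hT₁val, hT₁val] at h
      exact h
    have hme' : E1.valL SY me = m := rfl
    show T (E1.valL SX we) + E1.valL SY me = E1.valL SY y
    rw [hvalwe, hTx, hme']
    abel
  -- the continuous linear equivalence
  set e := ContinuousLinearEquiv.ofBijective g hgker hgrange with he
  set C := ‖(e.symm : E1 SY →L[ℂ] (W₁ × M₁e))‖ with hC
  refine ⟨C, norm_nonneg (e.symm : E1 SY →L[ℂ] (W₁ × M₁e)), ?_⟩
  rintro v ⟨x0, hx0c, hTx0⟩
  have hvc : v ∈ SY.carrier := by rw [← hTx0]; exact hT1mem _ hx0c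
  set ve : E1 SY := ⟨v, hvc⟩ with hve
  set p := e.symm ve with hp
  have hep : g p = ve := e.apply_symm_apply ve
  have hval : T (E1.valL SX p.1.1) + E1.valL SY p.2.1 = v := by
    have h := congrArg (E1.valL SY) hep
    rw [hgapp, map_add, hT₁val] at h
    exact h
  -- the M₁ component vanishes since v ∈ T(X₁)
  have hm0 : E1.valL SY p.2.1 = 0 := by
    apply hM₁inj _ p.2.2
    refine ⟨x0 - E1.valL SX p.1.1, sub_mem hx0c (E1.valL_mem _), ?_⟩
    rw [map_sub, hTx0]
    rw [← hval]; abel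
  refine ⟨E1.valL SX p.1.1, E1.valL_mem _, by rw [← hval, hm0, add_zero], ?_⟩
  have h1 : SX.n (E1.valL SX p.1.1) = ‖p.1‖ := by
    rw [← E1.norm_def]
    rfl
  have h2 : ‖p.1‖ ≤ ‖p‖ := norm_fst_le p
  have h3 : ‖p‖ ≤ C * ‖ve‖ := by
    rw [hp]
    exact (e.symm : E1 SY →L[ℂ] (W₁ × M₁e)).le_opNorm ve
  have h4 : ‖ve‖ = SY.n v := rfl
  rw [h1]
  calc ‖p.1‖ ≤ ‖p‖ := h2
    _ ≤ C * ‖ve‖ := h3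
    _ = C * SY.n v := by rw [h4]

lemma mem_interpSet_of_carrier (S : DenseSubNorm X) (θ : ℝ) {x : X}
    (hx : x ∈ S.carrier) : x ∈ interpSet S θ := by
  refine ⟨max ‖x‖ (S.n x), le_max_of_le_left (norm_nonneg x), fun _ => x,
    continuousOn_const, differentiableOn_const _, ⟨‖x‖, fun z _ => le_rfl⟩,
    fun t => hx, fun t => le_max_left _ _, fun t => le_max_right _ _, rfl⟩

lemma adm_comp (SX : DenseSubNorm X) (SY : DenseSubNorm Y) (A : X →L[ℂ] Y) (C : ℝ)
    (hC : 0 ≤ C) (hmem : ∀ x ∈ SX.carrier, A x ∈ SY.carrier)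
    (hbdd : ∀ x ∈ SX.carrier, SY.n (A x) ≤ C * SX.n x)
    (hop : ∀ x : X, ‖A x‖ ≤ C * ‖x‖)
    {θ M : ℝ} {x : X} {F : ℂ → X} (h : Adm SX θ x M F) :
    Adm SY θ (A x) (C * M) (fun z => A (F z)) := by
  obtain ⟨h1, h2, ⟨B, hB⟩, h4, h5, h6, h7⟩ := h
  refine ⟨A.continuous.comp_continuousOn h1,
    A.differentiable.comp_differentiableOn h2,
    ⟨‖A‖ * B, fun z hz => (A.le_opNorm _).trans
      (mul_le_mul_of_nonneg_left (hB z hz) (norm_nonneg _))⟩,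
    fun t => hmem _ (h4 t),
    fun t => (hop _).trans (mul_le_mul_of_nonneg_left (h5 t) hC),
    fun t => (hbdd _ (h4 t)).trans (mul_le_mul_of_nonneg_left (h6 t) hC),
    by simp only []; rw [h7]⟩

lemma interp_map (SX : DenseSubNorm X) (SY : DenseSubNorm Y) (A : X →L[ℂ] Y) (C : ℝ)
    (hC : 0 ≤ C) (hmem : ∀ x ∈ SX.carrier, A x ∈ SY.carrier)
    (hbdd : ∀ x ∈ SX.carrier, SY.n (A x) ≤ C * SX.n x)
    (hop : ∀ x : X, ‖A x‖ ≤ C * ‖x‖) (θ : ℝ) :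
    ∀ x ∈ interpSet SX θ, A x ∈ interpSet SY θ ∧
      interpNorm SY θ (A x) ≤ C * interpNorm SX θ x := by
  intro x hx
  set Sx := {M : ℝ | 0 ≤ M ∧ ∃ F : ℂ → X, Adm SX θ x M F} with hSx
  set Sy := {M : ℝ | 0 ≤ M ∧ ∃ F : ℂ → Y, Adm SY θ (A x) M F} with hSy
  have hSxne : Sx.Nonempty := hx
  have himg : ∀ M ∈ Sx, C * M ∈ Sy := by
    rintro M ⟨hM0, F, hF⟩
    exact ⟨mul_nonneg hC hM0, _, adm_comp SX SY A C hC hmem hbdd hop hF⟩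
  have hyne : Sy.Nonempty := ⟨C * hSxne.choose, himg _ hSxne.choose_spec⟩
  constructor
  · obtain ⟨M0, hM0, F, hF⟩ := hx
    exact ⟨C * M0, mul_nonneg hC hM0, _, adm_comp SX SY A C hC hmem hbdd hop hF⟩
  · have hbdl : BddBelow Sy := ⟨0, fun M hM => hM.1⟩
    have h1 : interpNorm SY θ (A x) ≤ sInf ((fun M => C * M) '' Sx) := by
      apply csInf_le_csInf hbdl ((hSxne).image _)
      rintro _ ⟨M, hM, rfl⟩
      exact himg M hM
    have h2 : sInf ((fun M => C * M) '' Sx) = C * sInf Sx := by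
      have := Real.sInf_smul_of_nonneg hC Sx
      rwa [← Set.image_smul, smul_eq_mul] at this
    rw [interpNorm, ← hSy]
    rw [interpNorm, ← hSx]
    calc sInf Sy ≤ sInf ((fun M => C * M) '' Sx) := h1
      _ = C * sInf Sx := h2

end AuxiliaryMachinery

theorem stmt9 {X Y : Type*}
    [NormedAddCommGroup X] [NormedSpace ℂ X] [CompleteSpace X]
    [NormedAddCommGroup Y] [NormedSpace ℂ Y] [CompleteSpace Y]
    (SX : DenseSubNorm X) (SY : DenseSubNorm Y)
    (T : X →L[ℂ] Y)
    -- `T` restricts to a bounded operator `X₁ → Y₁`: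
    (hT1mem : ∀ x ∈ SX.carrier, T x ∈ SY.carrier)
    (hT1bdd : ∃ M : ℝ, 0 ≤ M ∧ ∀ x ∈ SX.carrier, SY.n (T x) ≤ M * SX.n x)
    -- common (finite-dimensional) kernel `N` and common index `κ`:
    (N : Submodule ℂ X) (hNfin : FiniteDimensional ℂ N) (κ : ℤ)
    (hker : (N : Set X) = {x : X | T x = 0}) (hNsub : (N : Set X) ⊆ SX.carrier)
    -- `T : X₀ → Y₀` is Fredholm with index `κ`:
    (hFred0 : ∃ M₀ : Submodule ℂ Y, FiniteDimensional ℂ M₀ ∧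
      IsCompl M₀ (LinearMap.range (T : X →ₗ[ℂ] Y)) ∧
      (Module.finrank ℂ N : ℤ) - Module.finrank ℂ M₀ = κ)
    -- `T : X₁ → Y₁` is Fredholm with index `κ`:
    (hFred1 : ∃ M₁ : Submodule ℂ Y, FiniteDimensional ℂ M₁ ∧
      (M₁ : Set Y) ⊆ SY.carrier ∧
      (∀ y ∈ SY.carrier, ∃ m ∈ M₁, y - m ∈ T '' (SX.carrier : Set X)) ∧
      (∀ m ∈ M₁, m ∈ T '' (SX.carrier : Set X) → m = 0) ∧
      (Module.finrank ℂ N : ℤ) - Module.finrank ℂ M₁ = κ)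
    (θ : ℝ) (hθ : 0 < θ) (hθ' : θ < 1) :
    -- `T : [X₀,X₁]_θ → [Y₀,Y₁]_θ` is bounded,
    (∃ C : ℝ, 0 ≤ C ∧ ∀ x ∈ interpSet SX θ,
        T x ∈ interpSet SY θ ∧ interpNorm SY θ (T x) ≤ C * interpNorm SX θ x) ∧
    -- with kernel `N`,
    {x ∈ interpSet SX θ | T x = 0} = (N : Set X) ∧
    -- range `[Y₀,Y₁]_θ ∩ T(X₀)`,
    T '' (interpSet SX θ) = interpSet SY θ ∩ Set.range T ∧
    -- and it is Fredholm with index `κ`: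
    (∃ M' : Submodule ℂ Y, FiniteDimensional ℂ M' ∧
      (M' : Set Y) ⊆ interpSet SY θ ∧
      (∀ y ∈ interpSet SY θ, ∃ m ∈ M', y - m ∈ T '' (interpSet SX θ)) ∧
      (∀ m ∈ M', m ∈ T '' (interpSet SX θ) → m = 0) ∧
      (Module.finrank ℂ N : ℤ) - Module.finrank ℂ M' = κ) := by
  classical
  obtain ⟨MB, hMB0, hMB⟩ := hT1bdd
  obtain ⟨M₀, hM₀fin, hM₀compl, hM₀idx⟩ := hFred0
  obtain ⟨M₁, hM₁fin, hM₁sub, hM₁dec, hM₁inj, hM₁idx⟩ := hFred1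
  haveI := hNfin; haveI := hM₀fin; haveI := hM₁fin
  set Rng := LinearMap.range (T : X →ₗ[ℂ] Y) with hRngdef
  have hNker : ∀ x : X, x ∈ N ↔ T x = 0 := fun x => by
    have := Set.ext_iff.1 hker x; exact this
  -- continuous projection onto N, with closed complement W
  obtain ⟨P, hPmem, hPid, hPcompl⟩ :=
    closedCompl_proj (Submodule.ClosedComplemented.of_finiteDimensional N)
  set W := LinearMap.ker (P : X →ₗ[ℂ] X) with hWdef
  haveI : CompleteSpace W := (ContinuousLinearMap.isClosed_ker P).completeSpace_coe
  haveI : CompleteSpace M₀ := FiniteDimensional.complete ℂ M₀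
  haveI : CompleteSpace M₁ := FiniteDimensional.complete ℂ M₁
  obtain ⟨CeX, hCeXpos, hCeX⟩ := SX.embed
  obtain ⟨CeY, hCeYpos, hCeY⟩ := SY.embed
  obtain ⟨CN, hCN0, hCN⟩ := findim_n_bound SX N hNsub
  obtain ⟨CM₁, hCM₁0, hCM₁⟩ := findim_n_bound SY M₁ hM₁sub
  obtain ⟨C₁, hC₁0, hC₁⟩ := right_inverse_bound SX SY T hT1mem ⟨MB, hMB0, hMB⟩ N hNfin hker
    M₁ hM₁fin hM₁sub hM₁dec hM₁inj
  have hWsub : ∀ x : X, x - P x ∈ W := by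
    intro x
    rw [hWdef, LinearMap.mem_ker, map_sub, ContinuousLinearMap.coe_coe, hPid _ (hPmem x), sub_self]
  have hTP : ∀ x : X, T (P x) = 0 := fun x => (hNker _).1 (hPmem x)
  have hTsub : ∀ x : X, T (x - P x) = T x := fun x => by
    rw [map_sub, hTP, sub_zero]
  have hTW0 : ∀ w : W, T (w : X) = 0 → (w : X) = 0 := by
    intro w hw
    have h1 : (w : X) ∈ N ⊓ W := ⟨(hNker _).2 hw, w.2⟩
    rw [hPcompl.inf_eq_bot] at h1
    exact h1
  -- the equivalence e₀ : W × M₀ ≃L[ℂ] Y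
  set f₀ : (W × M₀) →L[ℂ] Y := (T.comp W.subtypeL).coprod M₀.subtypeL with hf₀def
  have hf₀app : ∀ p : W × M₀, f₀ p = T (p.1 : X) + (p.2 : Y) := fun p => rfl
  have hf₀ker : LinearMap.ker (f₀ : (W × M₀) →ₗ[ℂ] Y) = ⊥ := by
    rw [LinearMap.ker_eq_bot']
    rintro ⟨w, m⟩ hp
    have hp' : T (w : X) + (m : Y) = 0 := hp
    have hmRng : -(m : Y) ∈ Rng := ⟨(w : X), by rw [eq_neg_iff_add_eq_zero]; exact hp'⟩
    have hm0 : (m : Y) = 0 := by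
      have : (m : Y) ∈ M₀ ⊓ Rng := ⟨m.2, by simpa using neg_mem hmRng⟩
      rw [hM₀compl.inf_eq_bot] at this
      exact this
    have hw0 : (w : X) = 0 := hTW0 w (by rw [hm0, add_zero] at hp'; exact hp')
    exact Prod.ext (Subtype.ext hw0) (Subtype.ext hm0)
  have hf₀range : LinearMap.range (f₀ : (W × M₀) →ₗ[ℂ] Y) = ⊤ := by
    rw [LinearMap.range_eq_top, ContinuousLinearMap.coe_coe]
    intro y
    have hy : y ∈ M₀ ⊔ Rng := by rw [hM₀compl.sup_eq_top]; trivial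
    obtain ⟨m, hm, r, hr, hmr⟩ := Submodule.mem_sup.1 hy
    obtain ⟨x, hx⟩ := hr
    have hx' : T x = r := hx
    refine ⟨(⟨x - P x, hWsub x⟩, ⟨m, hm⟩), ?_⟩
    rw [hf₀app]
    show T (x - P x) + m = y
    rw [hTsub, hx']
    rw [← hmr]; abel
  set e₀ := ContinuousLinearEquiv.ofBijective f₀ hf₀ker hf₀range with he₀def
  have he₀symm : ∀ y : Y, T (((e₀.symm y).1 : W) : X) + (((e₀.symm y).2 : M₀) : Y) = y := by
    intro y
    have h := e₀.apply_symm_apply y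
    rw [show e₀ (e₀.symm y) = f₀ (e₀.symm y) from rfl, hf₀app] at h
    exact h
  set p₀ : Y →L[ℂ] M₀ :=
    (ContinuousLinearMap.snd ℂ W M₀).comp (e₀.symm : Y →L[ℂ] (W × M₀)) with hp₀def
  have hp₀app : ∀ y : Y, p₀ y = (e₀.symm y).2 := fun y => rfl
  have hp₀Rng : ∀ x : X, p₀ (T x) = 0 := by
    intro x
    have h1 : e₀ (⟨x - P x, hWsub x⟩, 0) = T x := by
      rw [show e₀ (⟨x - P x, hWsub x⟩, 0) = f₀ (⟨x - P x, hWsub x⟩, 0) from rfl, hf₀app]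
      show T (x - P x) + 0 = T x
      rw [hTsub, add_zero]
    rw [hp₀app, ← h1, e₀.symm_apply_apply]
  have hp₀M₀ : ∀ m : M₀, p₀ (m : Y) = m := by
    intro m
    have h1 : e₀ (0, m) = (m : Y) := by
      rw [show e₀ (0, m) = f₀ (0, m) from rfl, hf₀app]
      show T ((0 : W) : X) + (m : Y) = (m : Y)
      rw [show ((0 : W) : X) = 0 from rfl, map_zero, zero_add]
    rw [hp₀app, ← h1, e₀.symm_apply_apply]
  -- Step A: density gives SY.carrier ⊔ Rng = ⊤
  have hsup_top : SY.carrier ⊔ Rng = ⊤ := by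
    set s := SY.carrier ⊔ Rng with hsdef
    set K₂ : Submodule ℂ M₀ := s.comap M₀.subtype with hK₂def
    have hset : (s : Set Y) = e₀ '' ((Set.univ : Set W) ×ˢ (K₂ : Set M₀)) := by
      ext y
      constructor
      · intro hy
        refine ⟨e₀.symm y, ⟨trivial, ?_⟩, e₀.apply_symm_apply y⟩
        show (((e₀.symm y).2 : M₀) : Y) ∈ s
        have h1 := he₀symm y
        have h2 : (((e₀.symm y).2 : M₀) : Y) = y - T (((e₀.symm y).1 : W) : X) := by
          rw [eq_sub_iff_add_eq, add_comm]
          exact h1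
        rw [h2]
        exact sub_mem hy (le_sup_right (α := Submodule ℂ Y) (⟨_, rfl⟩ : _ ∈ Rng))
      · rintro ⟨⟨w, m⟩, ⟨-, hm⟩, rfl⟩
        show f₀ (w, m) ∈ s
        rw [hf₀app]
        exact add_mem (le_sup_right (α := Submodule ℂ Y) (⟨_, rfl⟩ : _ ∈ Rng)) hm
    have hclosed : IsClosed (s : Set Y) := by
      rw [hset]
      exact e₀.toHomeomorph.isClosedMap _
        (isClosed_univ.prod K₂.closed_of_finiteDimensional)
    have hdense : Dense (s : Set Y) :=
      SY.dense.mono (by exact_mod_cast le_sup_left (α := Submodule ℂ Y))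
    have huniv : (s : Set Y) = Set.univ := by
      rw [← hclosed.closure_eq, hdense.closure_eq]
    exact Submodule.eq_top_iff'.2 fun y => by
      have : y ∈ (s : Set Y) := huniv ▸ Set.mem_univ y
      exact this
  -- dimension count: M₁ ∩ Rng = 0
  have hdim : Module.finrank ℂ M₀ = Module.finrank ℂ M₁ := by omega
  have hM₁Rng : ∀ m ∈ M₁, m ∈ Rng → m = 0 := by
    set φ : M₁ →ₗ[ℂ] M₀ := (p₀ : Y →ₗ[ℂ] M₀).domRestrict M₁ with hφdef
    have hφapp : ∀ m : M₁, φ m = p₀ (m : Y) := fun m => rfl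
    have hφsurj : LinearMap.range φ = ⊤ := by
      rw [LinearMap.range_eq_top]
      intro m₀
      have hy : (m₀ : Y) ∈ SY.carrier ⊔ Rng := by rw [hsup_top]; trivial
      obtain ⟨c, hc, r, hr, hcr⟩ := Submodule.mem_sup.1 hy
      obtain ⟨mm, hmm, u, hu, hTu⟩ := hM₁dec c hc
      obtain ⟨xr, hxr⟩ := hr
      have hxr' : T xr = r := hxr
      refine ⟨⟨mm, hmm⟩, ?_⟩
      have h1 : (m₀ : Y) = mm + T u + T xr := by
        rw [← hcr, ← hxr']
        have : c = mm + T u := by rw [hTu]; abel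
        rw [this]
      have h2 : p₀ (m₀ : Y) = p₀ mm := by
        rw [h1]
        rw [map_add, map_add, hp₀Rng, hp₀Rng, add_zero, add_zero]
      have h3 := hp₀M₀ m₀
      exact (hφapp ⟨mm, hmm⟩).trans (h2.symm.trans h3)
    have hφker : LinearMap.ker φ = ⊥ := by
      have hrn := LinearMap.finrank_range_add_finrank_ker φ
      rw [hφsurj, finrank_top] at hrn
      have h0 : Module.finrank ℂ (LinearMap.ker φ) = 0 := by omega
      exact Submodule.finrank_eq_zero.1 h0
    intro m hmM hmR
    obtain ⟨x, hx⟩ := hmR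
    have hx' : T x = m := hx
    have hker0 : (⟨m, hmM⟩ : M₁) ∈ LinearMap.ker φ := by
      rw [LinearMap.mem_ker, hφapp]
      show p₀ m = 0
      rw [← hx', hp₀Rng]
    rw [hφker] at hker0
    exact congrArg Subtype.val hker0
  -- V-lemma : carrier ∩ range T = T(X₁)
  have hVlem : ∀ q : Y, q ∈ SY.carrier → q ∈ Rng → q ∈ T '' (SX.carrier : Set X) := by
    intro q hqc hqR
    obtain ⟨mm, hmm, u, hu, hTu⟩ := hM₁dec q hqc
    have hmmR : mm ∈ Rng := by
      have : mm = q - T u := by rw [hTu]; abel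
      rw [this]
      exact sub_mem hqR ⟨u, rfl⟩
    have hmm0 : mm = 0 := hM₁Rng mm hmm hmmR
    refine ⟨u, hu, ?_⟩
    rw [hTu, hmm0, sub_zero]
  -- the equivalence e : W × M₁ ≃L[ℂ] Y
  set f₁ : (W × M₁) →L[ℂ] Y := (T.comp W.subtypeL).coprod M₁.subtypeL with hf₁def
  have hf₁app : ∀ p : W × M₁, f₁ p = T (p.1 : X) + (p.2 : Y) := fun p => rfl
  have hf₁ker : LinearMap.ker (f₁ : (W × M₁) →ₗ[ℂ] Y) = ⊥ := by
    rw [LinearMap.ker_eq_bot']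
    rintro ⟨w, m⟩ hp
    have hp' : T (w : X) + (m : Y) = 0 := hp
    have hm0 : (m : Y) = 0 := by
      have hmem : (m : Y) ∈ Rng := by
        refine ⟨-(w : X), ?_⟩
        show T (-(w : X)) = (m : Y)
        rw [map_neg, neg_eq_iff_add_eq_zero]
        exact hp'
      exact hM₁Rng _ m.2 hmem
    have hw0 : (w : X) = 0 := hTW0 w (by rw [hm0, add_zero] at hp'; exact hp')
    exact Prod.ext (Subtype.ext hw0) (Subtype.ext hm0)
  have hf₁range : LinearMap.range (f₁ : (W × M₁) →ₗ[ℂ] Y) = ⊤ := by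
    rw [LinearMap.range_eq_top, ContinuousLinearMap.coe_coe]
    intro y
    have hy : y ∈ SY.carrier ⊔ Rng := by rw [hsup_top]; trivial
    obtain ⟨c, hc, r, hr, hcr⟩ := Submodule.mem_sup.1 hy
    obtain ⟨mm, hmm, u, hu, hTu⟩ := hM₁dec c hc
    obtain ⟨xr, hxr⟩ := hr
    have hxr' : T xr = r := hxr
    set x' := u + xr with hx'def
    refine ⟨(⟨x' - P x', hWsub x'⟩, ⟨mm, hmm⟩), ?_⟩
    rw [hf₁app]
    show T (x' - P x') + mm = y
    rw [hTsub, hx'def, map_add, hxr']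
    have hc' : c = mm + T u := by rw [hTu]; abel
    rw [← hcr, hc']
    abel
  set e := ContinuousLinearEquiv.ofBijective f₁ hf₁ker hf₁range with hedef
  set Φ : Y →L[ℂ] X := W.subtypeL.comp
    ((ContinuousLinearMap.fst ℂ W M₁).comp (e.symm : Y →L[ℂ] (W × M₁))) with hΦdef
  set ψ : Y →L[ℂ] Y := M₁.subtypeL.comp
    ((ContinuousLinearMap.snd ℂ W M₁).comp (e.symm : Y →L[ℂ] (W × M₁))) with hψdef
  have hΦapp : ∀ y : Y, Φ y = (((e.symm y).1 : W) : X) := fun y => rfl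
  have hψapp : ∀ y : Y, ψ y = (((e.symm y).2 : M₁) : Y) := fun y => rfl
  have hkey0 : ∀ y : Y, T (Φ y) + ψ y = y := by
    intro y
    have h := e.apply_symm_apply y
    rw [show e (e.symm y) = f₁ (e.symm y) from rfl, hf₁app] at h
    rw [hΦapp, hψapp]
    exact h
  have hψM₁ : ∀ y : Y, ψ y ∈ M₁ := fun y => by rw [hψapp]; exact ((e.symm y).2).2
  have hΦW : ∀ y : Y, Φ y ∈ W := fun y => by rw [hΦapp]; exact ((e.symm y).1).2
  have hΦRng : ∀ y ∈ Rng, T (Φ y) = y := by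
    rintro y ⟨x, hx⟩
    have hx' : T x = y := hx
    have h1 : e (⟨x - P x, hWsub x⟩, 0) = y := by
      rw [show e (⟨x - P x, hWsub x⟩, 0) = f₁ (⟨x - P x, hWsub x⟩, 0) from rfl, hf₁app]
      show T (x - P x) + 0 = y
      rw [hTsub, add_zero, hx']
    have h2 : e.symm y = (⟨x - P x, hWsub x⟩, 0) := by rw [← h1, e.symm_apply_apply]
    rw [hΦapp, h2]
    show T (x - P x) = y
    rw [hTsub, hx']
  -- n-boundedness of ψ, QL := T ∘ Φ, and Φ on the carriers
  set Cψ : ℝ := CM₁ * ‖ψ‖ * CeY with hCψdef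
  have hCψ0 : 0 ≤ Cψ :=
    mul_nonneg (mul_nonneg hCM₁0 (norm_nonneg _)) (le_of_lt hCeYpos)
  have hψbdd : ∀ y ∈ SY.carrier, ψ y ∈ SY.carrier ∧ SY.n (ψ y) ≤ Cψ * SY.n y := by
    intro y hy
    refine ⟨hM₁sub (hψM₁ y), ?_⟩
    calc SY.n (ψ y) ≤ CM₁ * ‖ψ y‖ := hCM₁ _ (hψM₁ y)
      _ ≤ CM₁ * (‖ψ‖ * ‖y‖) :=
          mul_le_mul_of_nonneg_left (ψ.le_opNorm y) hCM₁0
      _ ≤ CM₁ * (‖ψ‖ * (CeY * SY.n y)) := by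
          refine mul_le_mul_of_nonneg_left
            (mul_le_mul_of_nonneg_left (hCeY y hy) (norm_nonneg _)) hCM₁0
      _ = Cψ * SY.n y := by rw [hCψdef]; ring
  have hQbdd : ∀ y ∈ SY.carrier, T (Φ y) ∈ SY.carrier ∧
      SY.n (T (Φ y)) ≤ (1 + Cψ) * SY.n y := by
    intro y hy
    have hq : T (Φ y) = y - ψ y := by rw [eq_sub_iff_add_eq]; exact hkey0 y
    obtain ⟨hψc, hψn⟩ := hψbdd y hy
    constructor
    · rw [hq]; exact sub_mem hy hψc
    · rw [hq]
      calc SY.n (y - ψ y) ≤ SY.n y + SY.n (ψ y) := SY.n_sub hy hψc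
        _ ≤ SY.n y + Cψ * SY.n y := by linarith
        _ = (1 + Cψ) * SY.n y := by ring
  set CΦ : ℝ := (1 + CN * ‖P‖ * CeX) * C₁ * (1 + Cψ) with hCΦdef
  have hCΦ0 : 0 ≤ CΦ := by
    have h1 : 0 ≤ CN * ‖P‖ * CeX :=
      mul_nonneg (mul_nonneg hCN0 (norm_nonneg _)) (le_of_lt hCeXpos)
    have : (0:ℝ) ≤ 1 + CN * ‖P‖ * CeX := by linarith
    exact mul_nonneg (mul_nonneg this hC₁0) (by linarith)
  have hΦbdd : ∀ y ∈ SY.carrier, Φ y ∈ SX.carrier ∧ SX.n (Φ y) ≤ CΦ * SY.n y := by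
    intro y hy
    set q := T (Φ y) with hqdef
    obtain ⟨hqc, hqn⟩ := hQbdd y hy
    have hqR : q ∈ Rng := ⟨Φ y, rfl⟩
    obtain ⟨x₁, hx₁c, hTx₁, hnx₁⟩ := hC₁ q (hVlem q hqc hqR)
    -- Φ y = x₁ - P x₁
    have hΦeq : Φ y = x₁ - P x₁ := by
      have h1 : e (⟨x₁ - P x₁, hWsub x₁⟩, (e.symm y).2) = y := by
        rw [show e (⟨x₁ - P x₁, hWsub x₁⟩, (e.symm y).2)
            = f₁ (⟨x₁ - P x₁, hWsub x₁⟩, (e.symm y).2) from rfl, hf₁app]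
        show T (x₁ - P x₁) + (((e.symm y).2 : M₁) : Y) = y
        rw [hTsub, hTx₁, ← hψapp]
        rw [hqdef] at *
        exact hkey0 y
      have h2 : e.symm y = (⟨x₁ - P x₁, hWsub x₁⟩, (e.symm y).2) := by
        rw [← h1, e.symm_apply_apply]
      rw [hΦapp, h2]
    have hPx₁N : P x₁ ∈ N := hPmem x₁
    constructor
    · rw [hΦeq]
      exact sub_mem hx₁c (hNsub hPx₁N)
    · rw [hΦeq]
      have hb1 : SX.n (x₁ - P x₁) ≤ SX.n x₁ + SX.n (P x₁) :=
        SX.n_sub hx₁c (hNsub hPx₁N)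
      have hb2 : SX.n (P x₁) ≤ CN * ‖P x₁‖ := hCN _ hPx₁N
      have hb3 : ‖P x₁‖ ≤ ‖P‖ * ‖x₁‖ := P.le_opNorm x₁
      have hb4 : ‖x₁‖ ≤ CeX * SX.n x₁ := hCeX x₁ hx₁c
      have hb5 : SX.n x₁ ≤ C₁ * SY.n q := hnx₁
      have hb6 : SY.n q ≤ (1 + Cψ) * SY.n y := hqn
      have hnn : 0 ≤ SX.n x₁ := SX.n_nonneg _
      have hny : 0 ≤ SY.n y := SY.n_nonneg _
      have hnq : 0 ≤ SY.n q := SY.n_nonneg _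
      have hPx : SX.n (P x₁) ≤ CN * ‖P‖ * CeX * SX.n x₁ := by
        calc SX.n (P x₁) ≤ CN * ‖P x₁‖ := hb2
          _ ≤ CN * (‖P‖ * ‖x₁‖) := mul_le_mul_of_nonneg_left hb3 hCN0
          _ ≤ CN * (‖P‖ * (CeX * SX.n x₁)) := by
              refine mul_le_mul_of_nonneg_left
                (mul_le_mul_of_nonneg_left hb4 (norm_nonneg _)) hCN0
          _ = CN * ‖P‖ * CeX * SX.n x₁ := by ring
      have hstep : SX.n (x₁ - P x₁) ≤ (1 + CN * ‖P‖ * CeX) * SX.n x₁ := by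
        calc SX.n (x₁ - P x₁) ≤ SX.n x₁ + SX.n (P x₁) := hb1
          _ ≤ SX.n x₁ + CN * ‖P‖ * CeX * SX.n x₁ := by linarith
          _ = (1 + CN * ‖P‖ * CeX) * SX.n x₁ := by ring
      have h1p : (0:ℝ) ≤ 1 + CN * ‖P‖ * CeX := by
        have : 0 ≤ CN * ‖P‖ * CeX :=
          mul_nonneg (mul_nonneg hCN0 (norm_nonneg _)) (le_of_lt hCeXpos)
        linarith
      calc SX.n (x₁ - P x₁) ≤ (1 + CN * ‖P‖ * CeX) * SX.n x₁ := hstep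
        _ ≤ (1 + CN * ‖P‖ * CeX) * (C₁ * SY.n q) :=
            mul_le_mul_of_nonneg_left hb5 h1p
        _ ≤ (1 + CN * ‖P‖ * CeX) * (C₁ * ((1 + Cψ) * SY.n y)) := by
            refine mul_le_mul_of_nonneg_left
              (mul_le_mul_of_nonneg_left hb6 hC₁0) h1p
        _ = CΦ * SY.n y := by rw [hCΦdef]; ring
  -- Part 1 : boundedness of T at level θ
  set CT : ℝ := max 1 (max ‖T‖ MB) with hCTdef
  have hCT0 : (0:ℝ) ≤ CT := le_trans zero_le_one (le_max_left _ _)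
  have hTmap := interp_map SX SY T CT hCT0
    (fun x hx => hT1mem x hx)
    (fun x hx => (hMB x hx).trans (mul_le_mul_of_nonneg_right
      ((le_max_right ‖T‖ MB).trans (le_max_right _ _)) (SX.n_nonneg x)))
    (fun x => (T.le_opNorm x).trans (mul_le_mul_of_nonneg_right
      ((le_max_left ‖T‖ MB).trans (le_max_right _ _)) (norm_nonneg x))) θ
  -- Part 3 : range identity
  have hrange_eq : T '' (interpSet SX θ) = interpSet SY θ ∩ Set.range T := by
    apply Set.Subset.antisymm
    · rintro _ ⟨x, hx, rfl⟩
      exact ⟨(hTmap x hx).1, ⟨x, rfl⟩⟩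
    · rintro y ⟨hyI, x0, hx0⟩
      have hyR : y ∈ Rng := ⟨x0, hx0⟩
      set CΦ' : ℝ := max 1 (max ‖Φ‖ CΦ) with hCΦ'def
      have hCΦ'0 : (0:ℝ) ≤ CΦ' := le_trans zero_le_one (le_max_left _ _)
      have hΦmap := interp_map SY SX Φ CΦ' hCΦ'0
        (fun y hy => (hΦbdd y hy).1)
        (fun y hy => ((hΦbdd y hy).2).trans (mul_le_mul_of_nonneg_right
          ((le_max_right ‖Φ‖ CΦ).trans (le_max_right _ _)) (SY.n_nonneg y)))
        (fun y => (Φ.le_opNorm y).trans (mul_le_mul_of_nonneg_right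
          ((le_max_left ‖Φ‖ CΦ).trans (le_max_right _ _)) (norm_nonneg y))) θ
      exact ⟨Φ y, (hΦmap y hyI).1, hΦRng y hyR⟩
  refine ⟨⟨CT, hCT0, hTmap⟩, ?_, hrange_eq, ?_⟩
  -- Part 2 : kernel
  · ext x
    constructor
    · rintro ⟨-, hx0⟩
      exact (hNker x).2 hx0
    · intro hx
      exact ⟨mem_interpSet_of_carrier SX θ (hNsub hx), (hNker x).1 hx⟩
  -- Part 4 : Fredholm property at level θ
  · refine ⟨M₁, hM₁fin, fun m hm => mem_interpSet_of_carrier SY θ (hM₁sub hm), ?_, ?_, hM₁idx⟩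
    · intro y hy
      refine ⟨ψ y, hψM₁ y, ?_⟩
      have hsub : y - ψ y = T (Φ y) := by rw [eq_comm, eq_sub_iff_add_eq]; exact hkey0 y
      rw [hsub, hrange_eq]
      set QL : Y →L[ℂ] Y := T.comp Φ with hQLdef
      have hQLapp : ∀ z : Y, QL z = T (Φ z) := fun z => rfl
      set CQ : ℝ := max 1 (max ‖QL‖ (1 + Cψ)) with hCQdef
      have hCQ0 : (0:ℝ) ≤ CQ := le_trans zero_le_one (le_max_left _ _)
      have hQmap := interp_map SY SY QL CQ hCQ0
        (fun z hz => by rw [hQLapp]; exact (hQbdd z hz).1)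
        (fun z hz => by
          rw [hQLapp]
          exact ((hQbdd z hz).2).trans (mul_le_mul_of_nonneg_right
            ((le_max_right ‖QL‖ (1 + Cψ)).trans (le_max_right _ _)) (SY.n_nonneg z)))
        (fun z => (QL.le_opNorm z).trans (mul_le_mul_of_nonneg_right
          ((le_max_left ‖QL‖ (1 + Cψ)).trans (le_max_right _ _)) (norm_nonneg z))) θ
      have h1 : QL y ∈ interpSet SY θ := (hQmap y hy).1
      rw [hQLapp] at h1
      exact ⟨h1, ⟨Φ y, rfl⟩⟩
    · rintro m hm ⟨x, -, hTx⟩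
      exact hM₁Rng m hm ⟨x, hTx⟩
end

section
/- Let X, Y, Z be Banach spaces with a compact embedding X ↪ Z (the inclusion map is compact), and let T : X → Y be a bounded linear operator with finite-dimensional kernel and closed range. Then there exists c > 0 such that ‖u‖_X ≤ c (‖Tu‖_Y + ‖u‖_Z) for all u ∈ X (Peetre's lemma). -/
open Filter Set

/-- Peetre's lemma. -/
theorem stmt14 {X Y Z : Type*}
    [NormedAddCommGroup X] [NormedSpace ℂ X] [CompleteSpace X]
    [NormedAddCommGroup Y] [NormedSpace ℂ Y] [CompleteSpace Y]
    [NormedAddCommGroup Z] [NormedSpace ℂ Z] [CompleteSpace Z]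
    (ι : X →L[ℂ] Z) (hinj : Function.Injective ι) (hcomp : IsCompactOperator ι)
    (T : X →L[ℂ] Y) (hker : FiniteDimensional ℂ (LinearMap.ker (T : X →ₗ[ℂ] Y)))
    (hran : IsClosed (Set.range T)) :
    ∃ c : ℝ, 0 < c ∧ ∀ u : X, ‖u‖ ≤ c * (‖T u‖ + ‖ι u‖) := by
  classical
  set N : Submodule ℂ X := LinearMap.ker (T : X →ₗ[ℂ] Y) with hNdef
  -- a continuous projection onto the finite-dimensional kernel
  obtain ⟨Q, hQmem, hQid⟩ :
      ∃ Q : X →L[ℂ] X, (∀ x : X, Q x ∈ N) ∧ (∀ x ∈ N, Q x = x) := by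
    obtain ⟨f, hf⟩ := Submodule.ClosedComplemented.of_finiteDimensional N
    refine ⟨N.subtypeL.comp f, fun x => (f x).2, fun x hx => ?_⟩
    have := hf ⟨x, hx⟩
    simpa using congrArg (Subtype.val) this
  have hTQ : ∀ x : X, T (Q x) = 0 := fun x => (LinearMap.mem_ker).1 (hQmem x)
  have hQQ : ∀ x : X, Q (Q x) = Q x := fun x => hQid _ (hQmem x)
  -- bound on the complement of the kernel, via the open mapping theorem
  obtain ⟨C, hC0, hMbound⟩ :
      ∃ C : ℝ, 0 ≤ C ∧ ∀ m : X, Q m = 0 → ‖m‖ ≤ C * ‖T m‖ := by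
    set M : Submodule ℂ X := LinearMap.ker (Q : X →ₗ[ℂ] X) with hMdef
    have hMclosed : IsClosed (M : Set X) := ContinuousLinearMap.isClosed_ker Q
    haveI : CompleteSpace M := hMclosed.completeSpace_coe
    have hranSub : IsClosed ((LinearMap.range (T : X →ₗ[ℂ] Y) : Submodule ℂ Y) : Set Y) := by
      have hset : ((LinearMap.range (T : X →ₗ[ℂ] Y) : Submodule ℂ Y) : Set Y) = Set.range ⇑T := by
        ext y; simp [LinearMap.mem_range]
      rwa [hset]
    haveI : CompleteSpace (LinearMap.range (T : X →ₗ[ℂ] Y)) := hranSub.completeSpace_coe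
    set S : M →L[ℂ] (LinearMap.range (T : X →ₗ[ℂ] Y)) :=
      (T.comp M.subtypeL).codRestrict (LinearMap.range (T : X →ₗ[ℂ] Y))
        (fun m => LinearMap.mem_range_self _ _) with hSdef
    have hSinj : LinearMap.ker (S : M →ₗ[ℂ] (LinearMap.range (T : X →ₗ[ℂ] Y))) = ⊥ := by
      apply LinearMap.ker_eq_bot_of_injective
      intro m m' h
      have h1 : T (m : X) = T (m' : X) := congrArg Subtype.val h
      have h2 : (m : X) - (m' : X) ∈ N := by
        simp [hNdef, LinearMap.mem_ker, map_sub, h1]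
      have h3 : Q ((m : X) - (m' : X)) = (m : X) - (m' : X) := hQid _ h2
      have h4 : Q ((m : X) - (m' : X)) = 0 := by
        have hm : Q (m : X) = 0 := m.2
        have hm' : Q (m' : X) = 0 := m'.2
        simp [map_sub, hm, hm']
      have : (m : X) - (m' : X) = 0 := by rw [← h3, h4]
      exact Subtype.ext (sub_eq_zero.1 this)
    have hSsurj : LinearMap.range (S : M →ₗ[ℂ] (LinearMap.range (T : X →ₗ[ℂ] Y))) = ⊤ := by
      rw [LinearMap.range_eq_top]
      rintro ⟨y, u, rfl⟩
      have hmem : u - Q u ∈ M := by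
        simp [hMdef, LinearMap.mem_ker, map_sub, hQQ u]
      refine ⟨⟨u - Q u, hmem⟩, ?_⟩
      apply Subtype.ext
      show T (u - Q u) = T u
      simp [map_sub, hTQ u]
    set e := ContinuousLinearEquiv.ofBijective S hSinj hSsurj with hedef
    refine ⟨‖(e.symm : (LinearMap.range (T : X →ₗ[ℂ] Y)) →L[ℂ] M)‖, norm_nonneg _, fun m hmQ => ?_⟩
    set mm : M := ⟨m, hmQ⟩ with hmmdef
    have h1 : e.symm (e mm) = mm := e.symm_apply_apply mm
    have h2 : ‖e.symm (e mm)‖ ≤ ‖(e.symm : (LinearMap.range (T : X →ₗ[ℂ] Y)) →L[ℂ] M)‖ * ‖e mm‖ :=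
      (e.symm : (LinearMap.range (T : X →ₗ[ℂ] Y)) →L[ℂ] M).le_opNorm (e mm)
    have h3 : ‖e mm‖ = ‖T m‖ := rfl
    rw [h1, h3] at h2
    simpa using h2
  -- antilipschitz bound on the kernel
  obtain ⟨K, hK0, hNbound⟩ :
      ∃ K : ℝ, 0 < K ∧ ∀ n ∈ N, ‖n‖ ≤ K * ‖ι n‖ := by
    have hkerg : LinearMap.ker ((ι : X →ₗ[ℂ] Z).comp N.subtype) = ⊥ := by
      rw [LinearMap.ker_eq_bot]
      intro n n' h
      exact Subtype.ext (hinj h)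
    obtain ⟨K, hK0, hK⟩ := LinearMap.exists_antilipschitzWith _ hkerg
    refine ⟨K, hK0, fun n hn => ?_⟩
    have := hK.le_mul_dist (⟨n, hn⟩ : N) 0
    simpa [dist_eq_norm] using this
  -- norm of ι
  obtain ⟨Cι, hCι0, hCιb⟩ : ∃ Cι : ℝ, 0 ≤ Cι ∧ ∀ x : X, ‖ι x‖ ≤ Cι * ‖x‖ :=
    ⟨‖ι‖, norm_nonneg _, fun x => ι.le_opNorm x⟩
  clear hinj hcomp hran hker hNdef
  refine ⟨K + K * Cι * C + C + 1, by positivity, fun u => ?_⟩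
  obtain ⟨m, hm⟩ : ∃ m : X, m = u - Q u := ⟨_, rfl⟩
  have hmQ : Q m = 0 := by simp [hm, map_sub, hQQ u]
  have hTm : T m = T u := by simp [hm, map_sub, hTQ u]
  have hmb : ‖m‖ ≤ C * ‖T u‖ := hTm ▸ hMbound m hmQ
  have hQub : ‖Q u‖ ≤ K * ‖ι (Q u)‖ := hNbound _ (hQmem u)
  have hιQu : ‖ι (Q u)‖ ≤ ‖ι u‖ + Cι * (C * ‖T u‖) := by
    have h1 : ι (Q u) = ι u - ι m := by rw [hm, map_sub]; abel
    have h2 : ‖ι m‖ ≤ Cι * ‖m‖ := hCιb m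
    have h3 : ‖ι u - ι m‖ ≤ ‖ι u‖ + ‖ι m‖ := norm_sub_le _ _
    have h4 : Cι * ‖m‖ ≤ Cι * (C * ‖T u‖) := mul_le_mul_of_nonneg_left hmb hCι0
    rw [h1]
    linarith
  have husum : ‖u‖ ≤ ‖Q u‖ + ‖m‖ := by
    have hsum : Q u + m = u := by rw [hm]; abel
    calc ‖u‖ = ‖Q u + m‖ := by rw [hsum]
      _ ≤ ‖Q u‖ + ‖m‖ := norm_add_le _ _
  have h1 : (0:ℝ) ≤ ‖T u‖ := norm_nonneg _
  have h2 : (0:ℝ) ≤ ‖ι u‖ := norm_nonneg _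
  have hprod : K * ‖ι (Q u)‖ ≤ K * ‖ι u‖ + K * Cι * C * ‖T u‖ := by
    have h := mul_le_mul_of_nonneg_left hιQu (le_of_lt hK0)
    nlinarith
  have hrhs : (K + K * Cι * C + C + 1) * (‖T u‖ + ‖ι u‖)
      = K * ‖T u‖ + K * Cι * C * ‖T u‖ + C * ‖T u‖ + ‖T u‖
        + K * ‖ι u‖ + K * Cι * C * ‖ι u‖ + C * ‖ι u‖ + ‖ι u‖ := by ring
  have e1 : (0:ℝ) ≤ K * ‖T u‖ := by positivity
  have e2 : (0:ℝ) ≤ K * Cι * C * ‖ι u‖ := by positivity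
  have e3 : (0:ℝ) ≤ C * ‖ι u‖ := by positivity
  rw [hrhs]
  linarith
end

section
/- Conversely to Peetre's lemma: let X, Y, Z be Banach spaces with a compact embedding X ↪ Z, and let T : X → Y be a bounded linear operator such that ‖u‖_X ≤ c (‖Tu‖_Y + ‖u‖_Z) for all u ∈ X and some c > 0. Then T has finite-dimensional kernel and closed range. -/
open Filter Set Topology

/-- Key compactness lemma: any bounded sequence whose `T`-image is Cauchy has a
convergent subsequence. -/
lemma peetre_aux {X Y Z : Type*}
    [NormedAddCommGroup X] [NormedSpace ℂ X] [CompleteSpace X]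
    [NormedAddCommGroup Y] [NormedSpace ℂ Y]
    [NormedAddCommGroup Z] [NormedSpace ℂ Z]
    (ι : X →L[ℂ] Z) (hcomp : IsCompactOperator ι)
    (T : X →L[ℂ] Y) (c : ℝ) (hc : 0 < c)
    (hest : ∀ u : X, ‖u‖ ≤ c * (‖T u‖ + ‖ι u‖))
    (u : ℕ → X) (M : ℝ) (hM : ∀ n, ‖u n‖ ≤ M)
    (hT : CauchySeq fun n => T (u n)) :
    ∃ φ : ℕ → ℕ, StrictMono φ ∧ ∃ x : X, Tendsto (fun n => u (φ n)) atTop (𝓝 x) := by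
  have hK : IsCompact (closure (ι '' Metric.closedBall (0 : X) M)) :=
    hcomp.isCompact_closure_image_of_bounded Metric.isBounded_closedBall
  have hmem : ∀ n, ι (u n) ∈ closure (ι '' Metric.closedBall (0 : X) M) := fun n =>
    subset_closure (mem_image_of_mem _ (by simpa [Metric.mem_closedBall, dist_eq_norm] using hM n))
  obtain ⟨z, -, φ, hφ, hz⟩ := hK.tendsto_subseq hmem
  refine ⟨φ, hφ, ?_⟩
  have hιC : CauchySeq fun n => ι (u (φ n)) := hz.cauchySeq
  have hTC : CauchySeq fun n => T (u (φ n)) := hT.comp_tendsto hφ.tendsto_atTop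
  have hC : CauchySeq fun n => u (φ n) := by
    rw [Metric.cauchySeq_iff]
    intro ε hε
    have hδ : 0 < ε / (2 * c) := by positivity
    obtain ⟨N₁, hN₁⟩ := Metric.cauchySeq_iff.1 hTC _ hδ
    obtain ⟨N₂, hN₂⟩ := Metric.cauchySeq_iff.1 hιC _ hδ
    refine ⟨max N₁ N₂, fun m hm n hn => ?_⟩
    have h1 := hN₁ m (le_of_max_le_left hm) n (le_of_max_le_left hn)
    have h2 := hN₂ m (le_of_max_le_right hm) n (le_of_max_le_right hn)
    rw [dist_eq_norm] at h1 h2 ⊢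
    have := hest (u (φ m) - u (φ n))
    rw [map_sub, map_sub] at this
    calc ‖u (φ m) - u (φ n)‖ ≤ c * (‖T (u (φ m)) - T (u (φ n))‖ + ‖ι (u (φ m)) - ι (u (φ n))‖) :=
          this
      _ < c * (ε / (2 * c) + ε / (2 * c)) := by
          apply mul_lt_mul_of_pos_left (by linarith) hc
      _ = ε := by field_simp; ring
  exact cauchySeq_tendsto_of_complete hC

/-- Converse of Peetre's lemma. -/
theorem stmt15 {X Y Z : Type*}
    [NormedAddCommGroup X] [NormedSpace ℂ X] [CompleteSpace X]
    [NormedAddCommGroup Y] [NormedSpace ℂ Y] [CompleteSpace Y]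
    [NormedAddCommGroup Z] [NormedSpace ℂ Z] [CompleteSpace Z]
    (ι : X →L[ℂ] Z) (hinj : Function.Injective ι) (hcomp : IsCompactOperator ι)
    (T : X →L[ℂ] Y) (c : ℝ) (hc : 0 < c)
    (hest : ∀ u : X, ‖u‖ ≤ c * (‖T u‖ + ‖ι u‖)) :
    FiniteDimensional ℂ (LinearMap.ker (T : X →ₗ[ℂ] Y)) ∧ IsClosed (Set.range T) := by
  have hker_closed : IsClosed ((LinearMap.ker (T : X →ₗ[ℂ] Y) : Submodule ℂ X) : Set X) := ContinuousLinearMap.isClosed_ker T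
  constructor
  · -- finite-dimensional kernel
    have hcomp_ball : IsCompact (Metric.closedBall (0 : LinearMap.ker (T : X →ₗ[ℂ] Y)) 1) := by
      apply IsSeqCompact.isCompact
      intro u hu
      have hM : ∀ n, ‖((u n : X))‖ ≤ 1 := fun n => by
        have := hu n
        simpa [Metric.mem_closedBall, dist_eq_norm] using this
      have hTu : CauchySeq fun n => T ((u n : X)) := by
        have : (fun n => T ((u n : X))) = fun _ => (0 : Y) := by
          funext n; exact (u n).2
        rw [this]; exact cauchySeq_const 0
      obtain ⟨φ, hφ, x, hx⟩ := peetre_aux ι hcomp T c hc hest (fun n => (u n : X)) 1 hM hTu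
      have hxker : x ∈ LinearMap.ker (T : X →ₗ[ℂ] Y) :=
        hker_closed.mem_of_tendsto hx (Eventually.of_forall fun n => (u (φ n)).2)
      have hxnorm : ‖x‖ ≤ 1 :=
        le_of_tendsto (hx.norm) (Eventually.of_forall fun n => hM (φ n))
      refine ⟨⟨x, hxker⟩, ?_, φ, hφ, ?_⟩
      · simpa [Metric.mem_closedBall, dist_eq_norm] using hxnorm
      · rw [tendsto_subtype_rng]
        exact hx
    exact FiniteDimensional.of_isCompact_closedBall₀ ℂ one_pos hcomp_ball
  · -- closed range
    set S : Submodule ℂ X := LinearMap.ker (T : X →ₗ[ℂ] Y) with hS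
    haveI : IsClosed (S : Set X) := hker_closed
    set f : (X ⧸ S) →ₗ[ℂ] Y := S.liftQ (T : X →ₗ[ℂ] Y) le_rfl with hf
    have hfmk : ∀ x : X, f (Submodule.Quotient.mk x) = T x := fun x => rfl
    -- f is bounded
    have hbound : ∀ q : X ⧸ S, ‖f q‖ ≤ (‖T‖ + 1) * ‖q‖ := by
      intro q
      refine le_of_forall_pos_le_add fun ε hε => ?_
      have hε' : 0 < ε / (‖T‖ + 1) := by positivity
      obtain ⟨m, rfl, hm⟩ := Submodule.Quotient.norm_mk_lt q hε'
      rw [hfmk]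
      calc ‖T m‖ ≤ ‖T‖ * ‖m‖ := T.le_opNorm m
        _ ≤ (‖T‖ + 1) * ‖m‖ := by
            apply mul_le_mul_of_nonneg_right (by linarith) (norm_nonneg _)
        _ ≤ (‖T‖ + 1) * (‖Submodule.Quotient.mk (p := S) m‖ + ε / (‖T‖ + 1)) := by
            apply mul_le_mul_of_nonneg_left hm.le (by positivity)
        _ = (‖T‖ + 1) * ‖Submodule.Quotient.mk (p := S) m‖ + ε := by
            rw [mul_add]
            congr 1
            field_simp
    have hlip : LipschitzWith (Real.toNNReal (‖T‖ + 1)) f :=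
      AddMonoidHomClass.lipschitz_of_bound f (‖T‖ + 1) hbound
    -- f is bounded below
    have hlow : ∃ C : ℝ, 0 < C ∧ ∀ q : X ⧸ S, ‖q‖ ≤ C * ‖f q‖ := by
      by_contra h
      push_neg at h
      have hsel : ∀ n : ℕ, ∃ q : X ⧸ S, ‖q‖ = 1 ∧ ‖f q‖ < 1 / (n + 1) := by
        intro n
        obtain ⟨q, hq⟩ := h (n + 1) (by positivity)
        have hq0 : q ≠ 0 := by
          intro h0; rw [h0] at hq; simp at hq
        have hqn : 0 < ‖q‖ := norm_pos_iff.mpr hq0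
        refine ⟨((‖q‖ : ℂ))⁻¹ • q, ?_, ?_⟩
        · rw [norm_smul]
          simp [norm_inv, Complex.norm_real, abs_of_pos hqn, inv_mul_cancel₀ hqn.ne']
        · rw [map_smul, norm_smul]
          simp only [norm_inv, Complex.norm_real, Real.norm_eq_abs, abs_of_pos hqn]
          rw [inv_mul_lt_iff₀ hqn, mul_one_div, lt_div_iff₀ (by positivity : (0:ℝ) < (n:ℝ)+1)]
          nlinarith [hq]
      choose q hq1 hqf using hsel
      have hrep : ∀ n : ℕ, ∃ x : X, Submodule.Quotient.mk x = q n ∧ ‖x‖ < 2 := by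
        intro n
        obtain ⟨x, hx, hxn⟩ := Submodule.Quotient.norm_mk_lt (q n) one_pos
        exact ⟨x, hx, by rw [hq1 n] at hxn; linarith⟩
      choose x hxq hxn using hrep
      have hTx : Tendsto (fun n => T (x n)) atTop (𝓝 0) := by
        apply squeeze_zero_norm (fun n => ?_) tendsto_one_div_add_atTop_nhds_zero_nat
        rw [← hfmk, hxq]
        exact (hqf n).le
      obtain ⟨φ, hφ, xlim, hxlim⟩ := peetre_aux ι hcomp T c hc hest x 2 (fun n => (hxn n).le)
        hTx.cauchySeq
      have hTxlim : T xlim = 0 := by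
        have h1 : Tendsto (fun n => T (x (φ n))) atTop (𝓝 (T xlim)) :=
          (T.continuous.tendsto _).comp hxlim
        have h2 : Tendsto (fun n => T (x (φ n))) atTop (𝓝 0) :=
          hTx.comp hφ.tendsto_atTop
        exact tendsto_nhds_unique h1 h2
      have hxlimS : xlim ∈ S := LinearMap.mem_ker.mpr hTxlim
      have hcontra : Tendsto (fun n => ‖x (φ n) - xlim‖) atTop (𝓝 0) := by
        have := hxlim.sub_const xlim
        simpa using this.norm
      have hge : ∀ n, (1 : ℝ) ≤ ‖x (φ n) - xlim‖ := by
        intro n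
        have hmk : Submodule.Quotient.mk (p := S) (x (φ n) - xlim) = q (φ n) := by
          rw [Submodule.Quotient.mk_sub, (Submodule.Quotient.mk_eq_zero S).mpr hxlimS, sub_zero,
            hxq]
        calc (1 : ℝ) = ‖q (φ n)‖ := (hq1 (φ n)).symm
          _ = ‖Submodule.Quotient.mk (p := S) (x (φ n) - xlim)‖ := by rw [hmk]
          _ ≤ ‖x (φ n) - xlim‖ := Submodule.Quotient.norm_mk_le _ _
      have : (1 : ℝ) ≤ 0 := le_of_tendsto_of_tendsto' tendsto_const_nhds hcontra hge
      linarith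
    obtain ⟨C, hC0, hClow⟩ := hlow
    have hanti : AntilipschitzWith (Real.toNNReal C) f :=
      AddMonoidHomClass.antilipschitz_of_bound f (fun q => by
        rw [Real.coe_toNNReal C hC0.le]; exact hClow q)
    have hclosed_f : IsClosed (Set.range f) := hanti.isClosed_range hlip.uniformContinuous
    have hrange : Set.range T = Set.range f := by
      ext y
      constructor
      · rintro ⟨x, rfl⟩
        exact ⟨Submodule.Quotient.mk x, hfmk x⟩
      · rintro ⟨q, rfl⟩
        obtain ⟨x, rfl⟩ := Submodule.Quotient.mk_surjective S q
        exact ⟨x, (hfmk x).symm⟩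
    rw [hrange]
    exact hclosed_f
end

section
/- Let φ : [1,∞) → (0,∞) be measurable and slowly varying at infinity, let s ∈ ℝ, ε, δ > 0, and define ψ(t) = t^{ε/(ε+δ)} φ(t^{1/(ε+δ)}) for t ≥ 1 and ψ(t) = 1 for 0 < t < 1. Then ψ is pseudoconcave on some interval (r, ∞): there exist r > 0 and a positive concave function ψ₁ on (r,∞) such that ψ/ψ₁ and ψ₁/ψ are bounded on (r,∞). -/
open Filter Set

open MeasureTheory Pointwise in
lemma uniform_step (h : ℝ → ℝ) (hm : Measurable h)
    (hconv : ∀ u : ℝ, Tendsto (fun x => h (x + u) - h x) atTop (nhds 0))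
    {α : ℝ} (hα : 0 < α) :
    ∃ X : ℝ, ∀ x, X ≤ x → ∀ u ∈ Icc (0:ℝ) 2, |h (x + u) - h x| ≤ α := by
  by_contra hcon
  push_neg at hcon
  choose x hx u hu hbad using fun n : ℕ => hcon n
  have hα2 : 0 < α / 2 := half_pos hα
  set I : ℕ → Set ℝ := fun n =>
    Icc (0:ℝ) 2 ∩ ⋂ (m : ℕ) (_ : n ≤ m), {w : ℝ | |h (x m + w) - h (x m)| ≤ α / 2} with hIdef
  set K : ℕ → Set ℝ := fun n =>
    Icc (-2:ℝ) 2 ∩ ⋂ (m : ℕ) (_ : n ≤ m),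
      {v : ℝ | |h (x m + u m + v) - h (x m + u m)| ≤ α / 2} with hKdef
  have habs : ∀ c : ℝ, Measurable fun w : ℝ => |h (c + w) - h c| := fun c =>
    ((hm.comp (measurable_const_add c)).sub measurable_const).abs
  have hmeasI : ∀ n, MeasurableSet (I n) := fun n =>
    measurableSet_Icc.inter (MeasurableSet.iInter fun m => MeasurableSet.iInter fun _ =>
      measurableSet_le (habs (x m)) measurable_const)
  have hmeasK : ∀ n, MeasurableSet (K n) := fun n =>
    measurableSet_Icc.inter (MeasurableSet.iInter fun m => MeasurableSet.iInter fun _ =>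
      measurableSet_le (habs (x m + u m)) measurable_const)
  have hmonoI : Monotone I := by
    intro a b hab w hw
    obtain ⟨hw1, hw2⟩ := hw
    simp only [mem_iInter, mem_setOf_eq] at hw2
    exact ⟨hw1, by simp only [mem_iInter, mem_setOf_eq]; exact fun m hm' => hw2 m (hab.trans hm')⟩
  have hmonoK : Monotone K := by
    intro a b hab w hw
    obtain ⟨hw1, hw2⟩ := hw
    simp only [mem_iInter, mem_setOf_eq] at hw2
    exact ⟨hw1, by simp only [mem_iInter, mem_setOf_eq]; exact fun m hm' => hw2 m (hab.trans hm')⟩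
  -- a tail bound from pointwise convergence along any sequence going to infinity
  have htail : ∀ (z : ℕ → ℝ), (∀ m : ℕ, (m : ℝ) ≤ z m) → ∀ w : ℝ,
      ∃ n : ℕ, ∀ m : ℕ, n ≤ m → |h (z m + w) - h (z m)| ≤ α / 2 := by
    intro z hz w
    have hev : ∀ᶠ y : ℝ in atTop, |h (y + w) - h y| ≤ α / 2 := by
      have hnb : ∀ᶠ d : ℝ in nhds 0, |d| ≤ α / 2 := by
        filter_upwards [Metric.closedBall_mem_nhds (0:ℝ) hα2] with d hd
        simpa [Real.dist_eq] using hd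
      exact (hconv w).eventually hnb
    obtain ⟨N, hN⟩ := eventually_atTop.1 hev
    obtain ⟨n, hn⟩ := exists_nat_ge N
    exact ⟨n, fun m hm' => hN (z m) (hn.trans ((Nat.cast_le.2 hm').trans (hz m)))⟩
  have hIunion : ⋃ n, I n = Icc (0:ℝ) 2 := by
    apply Subset.antisymm
    · exact iUnion_subset fun n => inter_subset_left
    · intro w hw
      obtain ⟨n, hn⟩ := htail x hx w
      refine mem_iUnion.2 ⟨n, hw, ?_⟩
      simp only [mem_iInter, mem_setOf_eq]
      exact hn
  have hKunion : ⋃ n, K n = Icc (-2:ℝ) 2 := by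
    apply Subset.antisymm
    · exact iUnion_subset fun n => inter_subset_left
    · intro w hw
      have hz : ∀ m : ℕ, (m:ℝ) ≤ x m + u m := fun m => by
        have h1 := hx m; have h2 := (hu m).1; linarith
      obtain ⟨n, hn⟩ := htail (fun m => x m + u m) hz w
      refine mem_iUnion.2 ⟨n, hw, ?_⟩
      simp only [mem_iInter, mem_setOf_eq]
      exact hn
  have hItend := tendsto_measure_iUnion_atTop (μ := volume) hmonoI
  have hKtend := tendsto_measure_iUnion_atTop (μ := volume) hmonoK
  rw [hIunion] at hItend
  rw [hKunion] at hKtend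
  have hIev : ∀ᶠ n in atTop, ENNReal.ofReal (3/2) < volume (I n) := by
    refine hItend.eventually_const_lt ?_
    rw [Real.volume_Icc]
    rw [ENNReal.ofReal_lt_ofReal_iff (by norm_num)]
    norm_num
  have hKev : ∀ᶠ n in atTop, ENNReal.ofReal (7/2) < volume (K n) := by
    refine hKtend.eventually_const_lt ?_
    rw [Real.volume_Icc]
    rw [ENNReal.ofReal_lt_ofReal_iff (by norm_num)]
    norm_num
  obtain ⟨n, hIn, hKn⟩ := (hIev.and hKev).exists
  -- the translated set must meet I n
  have hne : (I n ∩ (u n +ᵥ K n)).Nonempty := by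
    by_contra hemp
    rw [Set.not_nonempty_iff_eq_empty] at hemp
    have hsub2 : I n ⊆ u n +ᵥ (Icc (-2:ℝ) 2 \ K n) := by
      intro w hw
      have hw2 : w ∈ Icc (0:ℝ) 2 := hw.1
      refine ⟨w - u n, ⟨⟨by linarith [(hu n).2, hw2.1], by linarith [(hu n).1, hw2.2]⟩, ?_⟩,
        by simp⟩
      intro hKmem
      exact Set.eq_empty_iff_forall_notMem.1 hemp w ⟨hw, ⟨w - u n, hKmem, by simp⟩⟩
    have h1 : volume (I n) ≤ volume (Icc (-2:ℝ) 2 \ K n) := by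
      calc volume (I n) ≤ volume (u n +ᵥ (Icc (-2:ℝ) 2 \ K n)) := measure_mono hsub2
        _ = volume (Icc (-2:ℝ) 2 \ K n) := measure_vadd volume (u n) _
    have h2 : volume (Icc (-2:ℝ) 2 \ K n) + volume (K n) = volume (Icc (-2:ℝ) 2) := by
      rw [← measure_union (disjoint_sdiff_left) (hmeasK n),
        Set.diff_union_of_subset inter_subset_left]
    have h3 : ENNReal.ofReal (3/2) + ENNReal.ofReal (7/2) < volume (Icc (-2:ℝ) 2) := by
      calc ENNReal.ofReal (3/2) + ENNReal.ofReal (7/2) < volume (I n) + volume (K n) :=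
            ENNReal.add_lt_add hIn hKn
        _ ≤ volume (Icc (-2:ℝ) 2 \ K n) + volume (K n) := add_le_add h1 le_rfl
        _ = volume (Icc (-2:ℝ) 2) := h2
    rw [Real.volume_Icc, ← ENNReal.ofReal_add (by norm_num) (by norm_num)] at h3
    rw [ENNReal.ofReal_lt_ofReal_iff (by norm_num)] at h3
    norm_num at h3
  obtain ⟨w, hwI, hwK⟩ := hne
  obtain ⟨v, hvK, hvw⟩ := hwK
  have hvw' : u n + v = w := hvw
  have hb1 : |h (x n + w) - h (x n)| ≤ α / 2 := by
    have := hwI.2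
    simp only [mem_iInter, mem_setOf_eq] at this
    exact this n le_rfl
  have hb2 : |h (x n + u n + v) - h (x n + u n)| ≤ α / 2 := by
    have := hvK.2
    simp only [mem_iInter, mem_setOf_eq] at this
    exact this n le_rfl
  have heq : x n + u n + v = x n + w := by linarith
  rw [heq] at hb2
  have : |h (x n + u n) - h (x n)| ≤ α := by
    calc |h (x n + u n) - h (x n)|
        ≤ |h (x n + u n) - h (x n + w)| + |h (x n + w) - h (x n)| := abs_sub_le _ _ _
      _ ≤ α / 2 + α / 2 := add_le_add (by rw [abs_sub_comm]; exact hb2) hb1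
      _ = α := by ring
  exact absurd this (not_le.2 (hbad n))

open MeasureTheory Pointwise in
lemma global_step (h : ℝ → ℝ) (hm : Measurable h)
    (hconv : ∀ u : ℝ, Tendsto (fun x => h (x + u) - h x) atTop (nhds 0))
    {γ : ℝ} (hγ : 0 < γ) :
    ∃ X : ℝ, ∀ x, X ≤ x → ∀ u : ℝ, 0 ≤ u → |h (x + u) - h x| ≤ γ * (u + 1) := by
  obtain ⟨X, hX⟩ := uniform_step h hm hconv hγ
  refine ⟨X, ?_⟩
  have key : ∀ k : ℕ, ∀ x, X ≤ x → ∀ w ∈ Icc (0:ℝ) 2,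
      |h (x + (2 * k + w)) - h x| ≤ γ * (k + 1) := by
    intro k
    induction k with
    | zero =>
      intro x hxX w hw
      simpa using hX x hxX w hw
    | succ k ih =>
      intro x hxX w hw
      have h1 : |h ((x + 2) + (2 * k + w)) - h (x + 2)| ≤ γ * (k + 1) :=
        ih (x + 2) (by linarith) w hw
      have h2 : |h (x + 2) - h x| ≤ γ := hX x hxX 2 ⟨by norm_num, le_rfl⟩
      have heq : (x + 2) + (2 * k + w) = x + (2 * (k + 1 : ℕ) + w) := by
        push_cast; ring
      rw [heq] at h1
      calc |h (x + (2 * (k+1:ℕ) + w)) - h x|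
          ≤ |h (x + (2 * (k+1:ℕ) + w)) - h (x + 2)| + |h (x + 2) - h x| := abs_sub_le _ _ _
        _ ≤ γ * (k + 1) + γ := add_le_add h1 h2
        _ = γ * ((k+1:ℕ) + 1) := by push_cast; ring
  intro x hxX u hu
  set k : ℕ := ⌊u / 2⌋₊ with hk
  have hk1 : (k : ℝ) ≤ u / 2 := Nat.floor_le (by positivity)
  have hk2 : u / 2 < (k : ℝ) + 1 := Nat.lt_floor_add_one _
  have hw1 : 0 ≤ u - 2 * k := by linarith
  have hw2 : u - 2 * k ≤ 2 := by linarith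
  have := key k x hxX (u - 2 * k) ⟨hw1, hw2⟩
  have heq : x + (2 * k + (u - 2 * k)) = x + u := by ring
  rw [heq] at this
  calc |h (x + u) - h x| ≤ γ * (k + 1) := this
    _ ≤ γ * (u + 1) := by nlinarith

open MeasureTheory Pointwise in
lemma potter (φ : ℝ → ℝ) (hmeas : Measurable φ) (hpos : ∀ t, 1 ≤ t → 0 < φ t)
    (hsv : SlowlyVarying φ) {γ : ℝ} (hγ : 0 < γ) :
    ∃ C : ℝ, 1 ≤ C ∧ ∃ T : ℝ, 1 ≤ T ∧ ∀ a b : ℝ, T ≤ a → a ≤ b →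
      φ b ≤ C * φ a * (b / a) ^ γ ∧ φ a ≤ C * φ b * (b / a) ^ γ := by
  set h : ℝ → ℝ := fun x => Real.log (φ (Real.exp x)) with hh
  have hm : Measurable h := Real.measurable_log.comp (hmeas.comp Real.measurable_exp)
  have hconv : ∀ u : ℝ, Tendsto (fun x => h (x + u) - h x) atTop (nhds 0) := by
    intro u
    have h1 : Tendsto (fun t : ℝ => φ (Real.exp u * t) / φ t) atTop (nhds 1) :=
      hsv (Real.exp u) (Real.exp_pos u)
    have h2 : Tendsto (fun x : ℝ => φ (Real.exp u * Real.exp x) / φ (Real.exp x)) atTop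
        (nhds 1) := h1.comp Real.tendsto_exp_atTop
    have h3 : Tendsto (fun x : ℝ => Real.log (φ (Real.exp u * Real.exp x) / φ (Real.exp x)))
        atTop (nhds 0) := by
      have := (Real.continuousAt_log one_ne_zero).tendsto.comp h2
      simpa [Function.comp_def] using this
    apply h3.congr'
    filter_upwards [eventually_ge_atTop (max 0 (-u))] with x hx
    have hx0 : (0:ℝ) ≤ x := le_trans (le_max_left _ _) hx
    have hxu : (0:ℝ) ≤ x + u := by
      have := le_trans (le_max_right _ _) hx; linarith
    have hp1 : 0 < φ (Real.exp x) := hpos _ (Real.one_le_exp hx0)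
    have hp2 : 0 < φ (Real.exp u * Real.exp x) := by
      rw [← Real.exp_add]
      exact hpos _ (Real.one_le_exp (by linarith))
    rw [Real.log_div (ne_of_gt hp2) (ne_of_gt hp1)]
    simp only [hh]
    rw [← Real.exp_add]
    ring_nf
  obtain ⟨X, hX⟩ := global_step h hm hconv hγ
  refine ⟨Real.exp γ, Real.one_le_exp (le_of_lt hγ), max 1 (Real.exp X),
    le_max_left _ _, ?_⟩
  intro a b ha hab
  have ha1 : (1:ℝ) ≤ a := le_trans (le_max_left _ _) ha
  have hb1 : (1:ℝ) ≤ b := le_trans ha1 hab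
  have ha0 : (0:ℝ) < a := lt_of_lt_of_le one_pos ha1
  have hb0 : (0:ℝ) < b := lt_of_lt_of_le one_pos hb1
  have hfa : 0 < φ a := hpos a ha1
  have hfb : 0 < φ b := hpos b hb1
  have hxX : X ≤ Real.log a := by
    have : Real.exp X ≤ a := le_trans (le_max_right _ _) ha
    exact (Real.le_log_iff_exp_le ha0).2 this
  have hu0 : 0 ≤ Real.log b - Real.log a := by
    have := Real.log_le_log ha0 hab
    linarith
  have hbound := hX (Real.log a) hxX (Real.log b - Real.log a) hu0
  rw [add_sub_cancel] at hbound
  simp only [hh, Real.exp_log ha0, Real.exp_log hb0] at hbound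
  have hba : (0:ℝ) < b / a := div_pos hb0 ha0
  have hrpow : (b / a) ^ γ = Real.exp (γ * (Real.log b - Real.log a)) := by
    rw [Real.rpow_def_of_pos hba, Real.log_div (ne_of_gt hb0) (ne_of_gt ha0)]
    ring_nf
  have hM : γ * (Real.log b - Real.log a + 1) =
      γ * (Real.log b - Real.log a) + γ := by ring
  rw [hM] at hbound
  rw [abs_le] at hbound
  constructor
  · have h1 : Real.log (φ b) ≤ Real.log (φ a) + (γ * (Real.log b - Real.log a) + γ) := by
      linarith [hbound.2]
    calc φ b = Real.exp (Real.log (φ b)) := (Real.exp_log hfb).symm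
      _ ≤ Real.exp (Real.log (φ a) + (γ * (Real.log b - Real.log a) + γ)) :=
          Real.exp_le_exp.2 h1
      _ = Real.exp γ * φ a * (b / a) ^ γ := by
          rw [hrpow, Real.exp_add, Real.exp_add, Real.exp_log hfa]
          ring
  · have h1 : Real.log (φ a) ≤ Real.log (φ b) + (γ * (Real.log b - Real.log a) + γ) := by
      linarith [hbound.1]
    calc φ a = Real.exp (Real.log (φ a)) := (Real.exp_log hfa).symm
      _ ≤ Real.exp (Real.log (φ b) + (γ * (Real.log b - Real.log a) + γ)) :=
          Real.exp_le_exp.2 h1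
      _ = Real.exp γ * φ b * (b / a) ^ γ := by
          rw [hrpow, Real.exp_add, Real.exp_add, Real.exp_log hfb]
          ring

open MeasureTheory Pointwise in
lemma concave_equiv (f : ℝ → ℝ) (r : ℝ) (hr : 0 < r)
    (hfpos : ∀ t ∈ Ioi r, 0 < f t)
    (θ C : ℝ) (hθ0 : 0 < θ) (hθ1 : θ < 1) (hC : 1 ≤ C)
    (hU : ∀ u ∈ Ioi r, ∀ t ∈ Ioi r, u ≤ t → f t ≤ C * f u * (t / u) ^ θ)
    (hL : ∀ u ∈ Ioi r, ∀ t ∈ Ioi r, u ≤ t → f u ≤ C * f t) :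
    ∃ ψ₁ : ℝ → ℝ, (∀ t ∈ Ioi r, 0 < ψ₁ t) ∧ ConcaveOn ℝ (Ioi r) ψ₁ ∧
      ∃ C' : ℝ, 0 < C' ∧ ∀ t ∈ Ioi r, f t / ψ₁ t ≤ C' ∧ ψ₁ t / f t ≤ C' := by
  haveI : Nonempty (Ioi r) := (Set.nonempty_Ioi (a := r)).to_subtype
  have hθ1' : 0 < 1 - θ := by linarith
  set K : ℝ := C / (1 - θ) with hK
  have hK0 : 0 < K := div_pos (by linarith) hθ1'
  have hCK : C ≤ K := by
    rw [hK, le_div_iff₀ hθ1']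
    nlinarith
  set g : ℝ → ℝ → ℝ := fun u t => K * f u * ((1 - θ) + θ * (t / u)) with hg
  set ψ₁ : ℝ → ℝ := fun t => ⨅ u : Ioi r, g u t with hψ₁
  -- each term is nonneg for t > 0
  have hgpos : ∀ u : Ioi r, ∀ t : ℝ, 0 < t → 0 < g u t := by
    intro u t ht
    have hu0 : (0:ℝ) < (u:ℝ) := lt_trans hr u.2
    have := hfpos u u.2
    have h1 : 0 < (1 - θ) + θ * (t / (u:ℝ)) := by
      have : 0 < t / (u:ℝ) := div_pos ht hu0
      nlinarith
    positivity
  -- lower bound: every term dominates f t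
  have hlow : ∀ t ∈ Ioi r, ∀ u : Ioi r, f t ≤ g u t := by
    intro t ht u
    have hu0 : (0:ℝ) < (u:ℝ) := lt_trans hr u.2
    have ht0 : (0:ℝ) < t := lt_trans hr ht
    have hfu := hfpos u u.2
    have hft := hfpos t ht
    rcases le_total (u:ℝ) t with hut | htu
    · -- u ≤ t : use hU and Bernoulli
      have h1 : f t ≤ C * f u * (t / (u:ℝ)) ^ θ := hU u u.2 t ht hut
      have h2 : (t / (u:ℝ)) ^ θ ≤ (1 - θ) + θ * (t / (u:ℝ)) := by
        have := Real.geom_mean_le_arith_mean2_weighted (le_of_lt hθ1') (le_of_lt hθ0)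
          zero_le_one (le_of_lt (div_pos ht0 hu0)) (by ring)
        simpa [Real.one_rpow] using this
      calc f t ≤ C * f u * (t / (u:ℝ)) ^ θ := h1
        _ ≤ C * f u * ((1 - θ) + θ * (t / (u:ℝ))) := by
            apply mul_le_mul_of_nonneg_left h2
            positivity
        _ ≤ K * f u * ((1 - θ) + θ * (t / (u:ℝ))) := by
            have hpos2 : 0 < (1 - θ) + θ * (t / (u:ℝ)) := by
              have : 0 < t / (u:ℝ) := div_pos ht0 hu0
              nlinarith
            apply mul_le_mul_of_nonneg_right _ (le_of_lt hpos2)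
            exact mul_le_mul_of_nonneg_right hCK (le_of_lt hfu)
    · -- t ≤ u : use hL
      have h1 : f t ≤ C * f u := hL t ht u u.2 htu
      have h2 : K * (1 - θ) = C := by
        rw [hK]; field_simp
      have h3 : 0 ≤ θ * (t / (u:ℝ)) := by positivity
      calc f t ≤ C * f u := h1
        _ = K * f u * (1 - θ) := by rw [← h2]; ring
        _ ≤ K * f u * ((1 - θ) + θ * (t / (u:ℝ))) := by nlinarith [mul_nonneg (mul_nonneg hK0.le hfu.le) h3]
  have hbdd : ∀ t ∈ Ioi r, BddBelow (range fun u : Ioi r => g u t) := by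
    intro t ht
    exact ⟨0, by rintro y ⟨u, rfl⟩; exact le_of_lt (hgpos u t (lt_trans hr ht))⟩
  have hψlow : ∀ t ∈ Ioi r, f t ≤ ψ₁ t := fun t ht => le_ciInf (hlow t ht)
  have hψhigh : ∀ t ∈ Ioi r, ψ₁ t ≤ K * f t := by
    intro t ht
    have := ciInf_le (hbdd t ht) (⟨t, ht⟩ : Ioi r)
    have heq : g (⟨t, ht⟩ : Ioi r) t = K * f t := by
      have ht0 : t ≠ 0 := ne_of_gt (lt_trans hr ht)
      simp only [hg]
      rw [div_self ht0]
      ring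
    rwa [heq] at this
  refine ⟨ψ₁, ?_, ?_, K, hK0, ?_⟩
  · exact fun t ht => lt_of_lt_of_le (hfpos t ht) (hψlow t ht)
  · refine ⟨convex_Ioi r, ?_⟩
    intro p hp q hq a b ha hb hab
    simp only [smul_eq_mul]
    have hmem : a * p + b * q ∈ Ioi r := (convex_Ioi r) hp hq ha hb hab
    apply le_ciInf
    intro u
    have h1 : ψ₁ p ≤ g u p := ciInf_le (hbdd p hp) u
    have h2 : ψ₁ q ≤ g u q := ciInf_le (hbdd q hq) u
    have hb' : b = 1 - a := by linarith
    subst hb'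
    have hu0 : ((u:ℝ)) ≠ 0 := ne_of_gt (lt_trans hr u.2)
    have haff : a * g u p + (1 - a) * g u q = g u (a * p + (1 - a) * q) := by
      simp only [hg]
      field_simp
      ring
    calc a * ψ₁ p + (1 - a) * ψ₁ q ≤ a * g u p + (1 - a) * g u q :=
          add_le_add (mul_le_mul_of_nonneg_left h1 ha) (mul_le_mul_of_nonneg_left h2 hb)
      _ = g u (a * p + (1 - a) * q) := haff
  · intro t ht
    have hft := hfpos t ht
    have hψt := lt_of_lt_of_le hft (hψlow t ht)
    constructor
    · have := hψlow t ht
      calc f t / ψ₁ t ≤ 1 := (div_le_one hψt).2 this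
        _ ≤ K := by
          calc (1:ℝ) ≤ C := hC
            _ ≤ K := hCK
    · exact (div_le_iff₀ hft).2 (by simpa using hψhigh t ht)

theorem stmt18 (φ : ℝ → ℝ) (hmeas : Measurable φ) (hpos : ∀ t, 1 ≤ t → 0 < φ t)
    (hsv : SlowlyVarying φ) (s ε δ : ℝ) (hε : 0 < ε) (hδ : 0 < δ) :
    (let ψ : ℝ → ℝ := fun t =>
      if 1 ≤ t then t ^ (ε / (ε + δ)) * φ (t ^ (1 / (ε + δ))) else 1
     ∃ r : ℝ, 0 < r ∧ ∃ ψ₁ : ℝ → ℝ,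
       (∀ t ∈ Ioi r, 0 < ψ₁ t) ∧
       ConcaveOn ℝ (Ioi r) ψ₁ ∧
       ∃ C : ℝ, 0 < C ∧ ∀ t ∈ Ioi r, ψ t / ψ₁ t ≤ C ∧ ψ₁ t / ψ t ≤ C) := by
  intro ψ
  have hψdef : ψ = fun t : ℝ =>
      if 1 ≤ t then t ^ (ε / (ε + δ)) * φ (t ^ (1 / (ε + δ))) else 1 := rfl
  have hεδ : (0:ℝ) < ε + δ := by linarith
  set θ : ℝ := ε / (ε + δ) with hθ
  set β : ℝ := 1 / (ε + δ) with hβ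
  set θ₂ : ℝ := (ε + δ / 2) / (ε + δ) with hθ₂
  have hβ0 : 0 < β := by positivity
  have hθ0 : 0 < θ := by positivity
  have hθ₂0 : 0 < θ₂ := by positivity
  have hθ₂1 : θ₂ < 1 := by
    rw [hθ₂, div_lt_one hεδ]; linarith
  have hγ0 : 0 < min (δ / 2) ε := lt_min (by linarith) hε
  obtain ⟨C, hC1, T, hT1, hPot⟩ := potter φ hmeas hpos hsv hγ0
  set r : ℝ := (max 1 T) ^ (ε + δ) with hrdef
  have hmax1 : (1:ℝ) ≤ max 1 T := le_max_left _ _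
  have hr1 : (1:ℝ) ≤ r := Real.one_le_rpow hmax1 hεδ.le
  have hr0 : (0:ℝ) < r := lt_of_lt_of_le one_pos hr1
  -- basic facts for t ∈ Ioi r
  have ht1 : ∀ t ∈ Ioi r, (1:ℝ) ≤ t := fun t ht => le_trans hr1 (le_of_lt ht)
  have ht0 : ∀ t ∈ Ioi r, (0:ℝ) < t := fun t ht => lt_of_lt_of_le one_pos (ht1 t ht)
  have hrβ : r ^ β = max 1 T := by
    rw [hrdef, ← Real.rpow_mul (le_trans zero_le_one hmax1)]
    rw [show (ε + δ) * β = 1 by rw [hβ]; field_simp]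
    exact Real.rpow_one _
  have hrtβ : ∀ t ∈ Ioi r, max 1 T ≤ t ^ β := by
    intro t ht
    have h1 : r ^ β ≤ t ^ β := Real.rpow_le_rpow hr0.le (le_of_lt ht) hβ0.le
    rwa [hrβ] at h1
  have hTle : ∀ t ∈ Ioi r, T ≤ t ^ β := fun t ht =>
    le_trans (le_max_right _ _) (hrtβ t ht)
  have hβpow1 : ∀ t ∈ Ioi r, (1:ℝ) ≤ t ^ β := fun t ht =>
    le_trans (le_max_left _ _) (hrtβ t ht)
  have hψeq : ∀ t ∈ Ioi r, ψ t = t ^ θ * φ (t ^ β) := by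
    intro t ht
    rw [hψdef]
    simp only [if_pos (ht1 t ht)]
  have hψpos : ∀ t ∈ Ioi r, 0 < ψ t := by
    intro t ht
    rw [hψeq t ht]
    have h1 : 0 < φ (t ^ β) := hpos _ (hβpow1 t ht)
    have h2 : (0:ℝ) < t ^ θ := Real.rpow_pos_of_pos (ht0 t ht) θ
    positivity
  -- the two comparison bounds
  have hmain : ∀ u ∈ Ioi r, ∀ t ∈ Ioi r, u ≤ t →
      ψ t ≤ C * ψ u * (t / u) ^ θ₂ ∧ ψ u ≤ C * ψ t := by
    intro u hu t ht hut
    have hu0 := ht0 u hu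
    have htt0 := ht0 t ht
    have hab : u ^ β ≤ t ^ β := Real.rpow_le_rpow hu0.le hut hβ0.le
    obtain ⟨hP1, hP2⟩ := hPot (u ^ β) (t ^ β) (hTle u hu) hab
    have hdiv0 : (0:ℝ) < t / u := div_pos htt0 hu0
    have hdiv1 : (1:ℝ) ≤ t / u := (one_le_div hu0).2 hut
    have hba : t ^ β / u ^ β = (t / u) ^ β := (Real.div_rpow htt0.le hu0.le β).symm
    have hba1 : (1:ℝ) ≤ (t / u) ^ β := Real.one_le_rpow hdiv1 hβ0.le
    have hφu : 0 < φ (u ^ β) := hpos _ (hβpow1 u hu)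
    have hφt : 0 < φ (t ^ β) := hpos _ (hβpow1 t ht)
    have hup : (0:ℝ) < u ^ θ := Real.rpow_pos_of_pos hu0 θ
    have htp : (0:ℝ) < t ^ θ := Real.rpow_pos_of_pos htt0 θ
    have htu_theta : u ^ θ * (t / u) ^ θ = t ^ θ := by
      rw [Real.div_rpow htt0.le hu0.le]
      field_simp
    constructor
    · -- upper bound
      have e1 : (t ^ β / u ^ β) ^ min (δ / 2) ε ≤ (t / u) ^ (β * (δ / 2)) := by
        rw [hba]
        calc ((t / u) ^ β) ^ min (δ / 2) ε ≤ ((t / u) ^ β) ^ (δ / 2) :=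
              Real.rpow_le_rpow_of_exponent_le hba1 (min_le_left _ _)
          _ = (t / u) ^ (β * (δ / 2)) := by rw [← Real.rpow_mul hdiv0.le]
      have e2 : φ (t ^ β) ≤ C * φ (u ^ β) * (t / u) ^ (β * (δ / 2)) := by
        calc φ (t ^ β) ≤ C * φ (u ^ β) * (t ^ β / u ^ β) ^ min (δ / 2) ε := hP1
          _ ≤ C * φ (u ^ β) * (t / u) ^ (β * (δ / 2)) := by
              apply mul_le_mul_of_nonneg_left e1
              positivity
      have hθsum : θ + β * (δ / 2) = θ₂ := by
        rw [hθ, hβ, hθ₂]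
        field_simp
      have hsplit : (t / u) ^ θ₂ = (t / u) ^ θ * (t / u) ^ (β * (δ / 2)) := by
        rw [← Real.rpow_add hdiv0, hθsum]
      rw [hψeq t ht, hψeq u hu]
      calc t ^ θ * φ (t ^ β) ≤ t ^ θ * (C * φ (u ^ β) * (t / u) ^ (β * (δ / 2))) :=
            mul_le_mul_of_nonneg_left e2 htp.le
        _ = C * (u ^ θ * φ (u ^ β)) * (t / u) ^ θ₂ := by
            rw [hsplit, ← htu_theta]; ring
    · -- lower bound
      have e1 : (t ^ β / u ^ β) ^ min (δ / 2) ε ≤ (t / u) ^ θ := by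
        rw [hba]
        calc ((t / u) ^ β) ^ min (δ / 2) ε ≤ ((t / u) ^ β) ^ ε :=
              Real.rpow_le_rpow_of_exponent_le hba1 (min_le_right _ _)
          _ = (t / u) ^ (β * ε) := by rw [← Real.rpow_mul hdiv0.le]
          _ = (t / u) ^ θ := by rw [show β * ε = θ by rw [hβ, hθ]; field_simp]
      have e2 : φ (u ^ β) ≤ C * φ (t ^ β) * (t / u) ^ θ := by
        calc φ (u ^ β) ≤ C * φ (t ^ β) * (t ^ β / u ^ β) ^ min (δ / 2) ε := hP2
          _ ≤ C * φ (t ^ β) * (t / u) ^ θ := by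
              apply mul_le_mul_of_nonneg_left e1
              positivity
      rw [hψeq u hu, hψeq t ht]
      calc u ^ θ * φ (u ^ β) ≤ u ^ θ * (C * φ (t ^ β) * (t / u) ^ θ) := by
            apply mul_le_mul_of_nonneg_left e2 hup.le
        _ = C * (t ^ θ * φ (t ^ β)) := by rw [← htu_theta]; ring
  obtain ⟨ψ₁, hψ₁pos, hψ₁conc, C', hC'0, hC'⟩ := concave_equiv ψ r hr0 hψpos θ₂ C hθ₂0 hθ₂1 hC1
    (fun u hu t ht hut => (hmain u hu t ht hut).1)
    (fun u hu t ht hut => (hmain u hu t ht hut).2)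
  exact ⟨r, hr0, ψ₁, hψ₁pos, hψ₁conc, C', hC'0, hC'⟩
end
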